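/- arXiv:math/9811177 — 9 statements merged into one kernel-verified Lean document; each statement's English description precedes it below -/
import Mathlib

section
/- Let X be a Hausdorff topological space and let κ be an infinite cardinal with |X| ≥ κ. Then X has a closed subset Y with κ ≤ |Y| ≤ 2^(2^κ); in particular, the set of cardinalities of closed subsets of X meets the interval [κ, 2^(2^κ)]. -/
universe u

lemma closure_inter_open_subset_mem {X : Type u} [TopologicalSpace X] {S U : Set X}
    (hU : IsOpen U) {x : X} (hx : x ∈ closure S) (hxU : x ∈ U) :
    x ∈ closure (S ∩ U) := by
  rw [mem_closure_iff] at hx ⊢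
  intro W hW hxW
  obtain ⟨y, hyWU, hyS⟩ := hx (W ∩ U) (hW.inter hU) ⟨hxW, hxU⟩
  exact ⟨y, hyWU.1, hyS, hyWU.2⟩

/-- If `X` is Hausdorff and `κ` is an infinite cardinal with `|X| ≥ κ`, then `X` has a
closed subset `Y` with `κ ≤ |Y| ≤ 2^(2^κ)`. -/
theorem exists_closed_subset_card_mem_interval {X : Type u} [TopologicalSpace X]
    [T2Space X] (κ : Cardinal.{u}) (hκ : Cardinal.aleph0 ≤ κ)
    (hX : κ ≤ Cardinal.mk X) :
    ∃ Y : Set X, IsClosed Y ∧ κ ≤ Cardinal.mk ↥Y ∧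
      Cardinal.mk ↥Y ≤ (2 : Cardinal) ^ ((2 : Cardinal) ^ κ) := by
  obtain ⟨S, hS⟩ := Cardinal.le_mk_iff_exists_set.mp hX
  refine ⟨closure S, isClosed_closure, ?_, ?_⟩
  · rw [← hS]
    exact Cardinal.mk_le_mk_of_subset subset_closure
  · have hinj : Function.Injective
        (fun x : closure S => {A : Set S | (x : X) ∈ closure ((↑) '' A)}) := by
      intro x y hxy
      by_contra hne
      have hne' : (x : X) ≠ (y : X) := fun h => hne (Subtype.ext h)
      obtain ⟨U, V, hUo, hVo, hxU, hyV, hUV⟩ := t2_separation hne'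
      have hxA : (x : X) ∈ closure (S ∩ U) :=
        closure_inter_open_subset_mem hUo x.2 hxU
      have hyA : (y : X) ∉ closure (S ∩ U) := by
        intro hy
        have : closure (S ∩ U) ⊆ Vᶜ := by
          apply closure_minimal _ (hVo.isClosed_compl)
          intro z hz hzV
          exact hUV.ne_of_mem hz.2 hzV rfl
        exact this hy hyV
      have himg : (↑) '' {a : S | (a : X) ∈ U} = S ∩ U := by
        ext z
        constructor
        · rintro ⟨⟨w, hw⟩, hwU, rfl⟩; exact ⟨hw, hwU⟩
        · rintro ⟨hzS, hzU⟩; exact ⟨⟨z, hzS⟩, hzU, rfl⟩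
      have hx' : {a : S | (a : X) ∈ U} ∈ {A : Set S | (x : X) ∈ closure ((↑) '' A)} := by
        simpa [himg] using hxA
      simp only [] at hxy
      rw [show {A : Set S | (x : X) ∈ closure ((↑) '' A)} = {A : Set S | (y : X) ∈ closure ((↑) '' A)} from hxy] at hx'
      exact hyA (by simpa [himg] using hx')
    have := Cardinal.mk_le_of_injective hinj
    calc Cardinal.mk (closure S) ≤ Cardinal.mk (Set (Set S)) := this
      _ = (2 : Cardinal) ^ ((2 : Cardinal) ^ κ) := by
          simp [Cardinal.mk_set, hS]
end

section
/- Let λ be an infinite cardinal and I any set. If P is a collection of finite partial functions from I to λ that is pairwise incompatible — i.e. for any two distinct p, q ∈ P there exists an index i lying in the domain of both p and q with p(i) ≠ q(i) — then |P| ≤ λ. -/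
/-- A finite partial function from `I` to `λ`, represented as an `Option`-valued map:
`x i = some e` means `i` lies in the domain of `x` with value `e`. It has finite domain
and all values are ordinals below `λ`. -/
def IsFinPartialFun (I : Type) (l : Cardinal.{0}) (x : I → Option Ordinal.{0}) : Prop :=
  {i | x i ≠ none}.Finite ∧ ∀ i e, x i = some e → e < l.ord

lemma aux_card_antichain (l : Cardinal.{0}) (hl : Cardinal.aleph0 ≤ l) :
    ∀ (n : ℕ) (I : Type) (P : Set (I → Option Ordinal.{0})),
    (∀ p ∈ P, ∃ s : Finset I, s.card ≤ n ∧ ∀ i, i ∉ s → p i = none) →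
    (∀ p ∈ P, ∀ i e, p i = some e → e < l.ord) →
    (∀ p ∈ P, ∀ q ∈ P, p ≠ q →
      ∃ i a b, p i = some a ∧ q i = some b ∧ a ≠ b) →
    Cardinal.mk ↥P ≤ Cardinal.lift.{1} l := by
  intro n
  induction n with
  | zero =>
    intro I P hdom _ _
    have hsub : P ⊆ {fun _ => none} := by
      intro p hp
      obtain ⟨s, hs, hs'⟩ := hdom p hp
      have : s = ∅ := Finset.card_eq_zero.mp (Nat.le_zero.mp hs)
      subst this
      funext i
      exact hs' i (Finset.notMem_empty i)
    calc Cardinal.mk ↥P ≤ Cardinal.mk ↥({fun _ => none} : Set (I → Option Ordinal.{0})) :=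
          Cardinal.mk_le_mk_of_subset hsub
      _ = 1 := Cardinal.mk_singleton _
      _ ≤ Cardinal.lift.{1} l :=
          le_trans Cardinal.one_le_aleph0 (Cardinal.aleph0_le_lift.mpr hl)
  | succ n ih =>
    intro I P hdom hval hinc
    classical
    rcases P.eq_empty_or_nonempty with hP | ⟨p₀, hp₀⟩
    · simp [hP]
    obtain ⟨s₀, hs₀card, hs₀⟩ := hdom p₀ hp₀
    set A : (ULift.{1} ↥s₀) × ↥(Set.Iio l.ord) → Set (I → Option Ordinal.{0}) :=
      fun x => {q ∈ P | q x.1.down = some x.2} with hA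
    -- cover
    have hcover : P ⊆ insert p₀ (⋃ x, A x) := by
      intro q hq
      by_cases hqp : q = p₀
      · exact Or.inl hqp
      · right
        obtain ⟨i, a, b, hpa, hqb, hab⟩ := hinc p₀ hp₀ q hq (Ne.symm hqp)
        have his : i ∈ s₀ := by
          by_contra h
          rw [hs₀ i h] at hpa
          simp at hpa
        have hb : b < l.ord := hval q hq i b hqb
        exact Set.mem_iUnion.mpr ⟨(⟨⟨i, his⟩⟩, ⟨b, hb⟩), hq, hqb⟩
    -- each A bounded
    have hAle : ∀ x, Cardinal.mk ↥(A x) ≤ Cardinal.lift.{1} l := by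
      rintro ⟨⟨i, his⟩, α, hα⟩
      set f : (I → Option Ordinal.{0}) → (I → Option Ordinal.{0}) :=
        fun q => Function.update q i none with hf
      have hinjOn : Set.InjOn f (A (⟨⟨i, his⟩⟩, ⟨α, hα⟩)) := by
        rintro q ⟨hqP, hqi⟩ q' ⟨hq'P, hq'i⟩ heq
        funext j
        by_cases hj : j = i
        · subst hj; rw [hqi, hq'i]
        · have := congrFun heq j
          simpa only [hf, Function.update_of_ne hj] using this
      have h1 : Cardinal.mk ↥(A (⟨⟨i, his⟩⟩, ⟨α, hα⟩)) =
          Cardinal.mk ↥(f '' A (⟨⟨i, his⟩⟩, ⟨α, hα⟩)) :=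
        (Cardinal.mk_image_eq_of_injOn f _ hinjOn).symm
      rw [h1]
      apply ih I (f '' A (⟨⟨i, his⟩⟩, ⟨α, hα⟩))
      · rintro p ⟨q, ⟨hqP, hqi⟩, rfl⟩
        obtain ⟨s, hscard, hs⟩ := hdom q hqP
        have hisq : i ∈ s := by
          by_contra h
          rw [hs i h] at hqi; simp at hqi
        refine ⟨s.erase i, ?_, ?_⟩
        · rw [Finset.card_erase_of_mem hisq]
          omega
        · intro j hj
          by_cases hji : j = i
          · subst hji; simp [hf]
          · rw [Finset.mem_erase] at hj
            push_neg at hj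
            rw [hf]
            simp only [Function.update_of_ne hji]
            exact hs j (hj hji)
      · rintro p ⟨q, ⟨hqP, hqi⟩, rfl⟩ j e hje
        by_cases hji : j = i
        · subst hji; simp [hf] at hje
        · rw [hf] at hje
          simp only [Function.update_of_ne hji] at hje
          exact hval q hqP j e hje
      · rintro p ⟨q, ⟨hqP, hqi⟩, rfl⟩ p' ⟨q', ⟨hq'P, hq'i⟩, rfl⟩ hne
        have hqq' : q ≠ q' := by rintro rfl; exact hne rfl
        obtain ⟨j, a, b, hja, hjb, hab⟩ := hinc q hqP q' hq'P hqq'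
        have hji : j ≠ i := by
          rintro rfl
          rw [hqi] at hja; rw [hq'i] at hjb
          exact hab ((Option.some_inj.mp hja).symm.trans (Option.some_inj.mp hjb))
        refine ⟨j, a, b, ?_, ?_, hab⟩
        · rw [hf]; simpa only [Function.update_of_ne hji] using hja
        · rw [hf]; simpa only [Function.update_of_ne hji] using hjb
    -- index cardinality
    have hι : Cardinal.mk ((ULift.{1} ↥s₀) × ↥(Set.Iio l.ord)) ≤ Cardinal.lift.{1} l := by
      rw [Cardinal.mk_prod, Cardinal.lift_id, Cardinal.lift_id]
      have h1 : Cardinal.mk (ULift.{1} ↥s₀) ≤ Cardinal.lift.{1} l := by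
        rw [Cardinal.mk_uLift]
        calc Cardinal.lift.{1} (Cardinal.mk ↥s₀) ≤ Cardinal.lift.{1} Cardinal.aleph0 :=
              Cardinal.lift_le.mpr (le_of_lt (Cardinal.lt_aleph0_of_finite _))
          _ = Cardinal.aleph0 := Cardinal.lift_aleph0
          _ ≤ Cardinal.lift.{1} l := Cardinal.aleph0_le_lift.mpr hl
      have h2 : Cardinal.mk ↥(Set.Iio l.ord) ≤ Cardinal.lift.{1} l := by
        rw [Ordinal.mk_Iio_ordinal, Cardinal.card_ord]
      calc _ ≤ Cardinal.lift.{1} l * Cardinal.lift.{1} l := mul_le_mul' h1 h2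
        _ = Cardinal.lift.{1} l := Cardinal.mul_eq_self (Cardinal.aleph0_le_lift.mpr hl)
    have hUle : Cardinal.mk ↥(⋃ x, A x) ≤ Cardinal.lift.{1} l := by
      calc Cardinal.mk ↥(⋃ x, A x) ≤ Cardinal.mk _ * ⨆ x, Cardinal.mk ↥(A x) :=
            Cardinal.mk_iUnion_le A
        _ ≤ Cardinal.lift.{1} l * Cardinal.lift.{1} l :=
            mul_le_mul' hι (ciSup_le' hAle)
        _ = Cardinal.lift.{1} l := Cardinal.mul_eq_self (Cardinal.aleph0_le_lift.mpr hl)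
    calc Cardinal.mk ↥P ≤ Cardinal.mk ↥(insert p₀ (⋃ x, A x)) :=
          Cardinal.mk_le_mk_of_subset hcover
      _ ≤ Cardinal.mk ↥(⋃ x, A x) + 1 := Cardinal.mk_insert_le
      _ ≤ Cardinal.lift.{1} l + 1 := by gcongr
      _ = Cardinal.lift.{1} l := Cardinal.add_one_eq (Cardinal.aleph0_le_lift.mpr hl)


/-- If `P` is a collection of finite partial functions from `I` to `λ` (`λ` infinite)
that is pairwise incompatible — any two distinct members take different values at some
common point of their domains — then `|P| ≤ λ`. -/
theorem card_pairwise_incompatible_le (I : Type) (l : Cardinal.{0})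
    (hl : Cardinal.aleph0 ≤ l)
    (P : Set (I → Option Ordinal.{0}))
    (hP : ∀ p ∈ P, IsFinPartialFun I l p)
    (hinc : ∀ p ∈ P, ∀ q ∈ P, p ≠ q →
      ∃ i a b, p i = some a ∧ q i = some b ∧ a ≠ b) :
    Cardinal.mk ↥P ≤ Cardinal.lift.{1} l := by
  classical
  set Pn : ULift.{1} ℕ → Set (I → Option Ordinal.{0}) :=
    fun n => {p ∈ P | ∃ s : Finset I, s.card ≤ n.down ∧ ∀ i ∉ s, p i = none} with hPn
  have hcover : P ⊆ ⋃ n, Pn n := by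
    intro p hp
    obtain ⟨hfin, _⟩ := hP p hp
    refine Set.mem_iUnion.mpr ⟨⟨hfin.toFinset.card⟩, hp, hfin.toFinset, le_refl _, ?_⟩
    intro i hi
    by_contra h
    exact hi (hfin.mem_toFinset.mpr h)
  have hn : ∀ n, Cardinal.mk ↥(Pn n) ≤ Cardinal.lift.{1} l := fun n =>
    aux_card_antichain l hl n.down I (Pn n)
      (fun p hp => hp.2)
      (fun p hp i e he => (hP p hp.1).2 i e he)
      (fun p hp q hq hne => hinc p hp.1 q hq.1 hne)
  have hidx : Cardinal.mk (ULift.{1} ℕ) ≤ Cardinal.lift.{1} l := by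
    rw [Cardinal.mk_uLift, Cardinal.mk_nat, Cardinal.lift_aleph0]
    exact Cardinal.aleph0_le_lift.mpr hl
  calc Cardinal.mk ↥P ≤ Cardinal.mk ↥(⋃ n, Pn n) := Cardinal.mk_le_mk_of_subset hcover
    _ ≤ Cardinal.mk (ULift.{1} ℕ) * ⨆ n, Cardinal.mk ↥(Pn n) := Cardinal.mk_iUnion_le _
    _ ≤ Cardinal.lift.{1} l * Cardinal.lift.{1} l := mul_le_mul' hidx (ciSup_le' hn)
    _ = Cardinal.lift.{1} l := Cardinal.mul_eq_self (Cardinal.aleph0_le_lift.mpr hl)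
end

section
/- Assume the Setup. For a set A ⊆ λ, let B⁺(A) be the collection of finite partial functions x from I to λ such that A ∩ A_x is D₀-null while A ∩ A_y is D₀-positive for every proper restriction y of x, and let B(A) = B⁺(A) ∪ B⁺(λ ∖ A). Then B(A) is predense: for every finite partial function x from I to λ there exists y ∈ B(A) that is compatible with x. -/
/-- `C` is a club in the cardinal `κ` (viewed as the set of ordinals below `κ`): it is a
set of ordinals below `κ`, unbounded in `κ`, and closed under suprema of its nonempty
subsets that are bounded below `κ`. -/
def IsClubIn (k : Cardinal.{0}) (C : Set Ordinal.{0}) : Prop :=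
  C ⊆ Set.Iio k.ord ∧
  (∀ a < k.ord, ∃ b ∈ C, a ≤ b) ∧
  (∀ S : Set Ordinal.{0}, S ⊆ C → S.Nonempty → sSup S < k.ord → sSup S ∈ C)

/-- `S` is a stationary subset of the cardinal `κ`: a set of ordinals below `κ` meeting
every club in `κ`. -/
def IsStationaryIn (k : Cardinal.{0}) (S : Set Ordinal.{0}) : Prop :=
  S ⊆ Set.Iio k.ord ∧ ∀ C, IsClubIn k C → (S ∩ C).Nonempty

/-- Two partial functions are compatible if they agree on the intersection of their
domains. -/
def Compatible {I : Type} (x y : I → Option Ordinal.{0}) : Prop :=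
  ∀ i a b, x i = some a → y i = some b → a = b

/-- `y` is a proper restriction of `x`: the graph of `y` is contained in that of `x`,
and `y ≠ x`. -/
def ProperRestriction {I : Type} (y x : I → Option Ordinal.{0}) : Prop :=
  (∀ i e, y i = some e → x i = some e) ∧ y ≠ x

/-- `A_x = ⋂_{ξ ∈ dom x} A_{ξ, x(ξ)}`, as a subset of `λ` (so `A_∅ = λ`). -/
def AxSet {I : Type} (l : Cardinal.{0}) (A : I → Ordinal.{0} → Set Ordinal.{0})
    (x : I → Option Ordinal.{0}) : Set Ordinal.{0} :=
  {a | a < l.ord ∧ ∀ i e, x i = some e → a ∈ A i e}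

/-- `D` is a filter on the cardinal `λ` (viewed as the set of ordinals below `λ`):
a proper, nonempty collection of subsets of `λ` closed under finite intersections and
supersets (within `λ`). -/
def IsFilterOn (l : Cardinal.{0}) (D : Set (Set Ordinal.{0})) : Prop :=
  (∀ A ∈ D, A ⊆ Set.Iio l.ord) ∧
  Set.Iio l.ord ∈ D ∧
  (∅ : Set Ordinal.{0}) ∉ D ∧
  (∀ A B, A ∈ D → B ∈ D → A ∩ B ∈ D) ∧
  (∀ A B, A ∈ D → A ⊆ B → B ⊆ Set.Iio l.ord → B ∈ D)

/-- `A` is `D`-null: its complement (relative to `λ`) belongs to `D`. -/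
def DNull (l : Cardinal.{0}) (D : Set (Set Ordinal.{0})) (A : Set Ordinal.{0}) : Prop :=
  Set.Iio l.ord \ A ∈ D

/-- `A` is `D`-positive: its complement (relative to `λ`) does not belong to `D`. -/
def DPositive (l : Cardinal.{0}) (D : Set (Set Ordinal.{0})) (A : Set Ordinal.{0}) :
    Prop :=
  ¬ DNull l D A

/-- `B⁺(S)`: the collection of finite partial functions `x` from `I` to `λ` such that
`S ∩ A_x` is `D`-null while `S ∩ A_y` is `D`-positive for every proper restriction `y`
of `x`. -/
def BPlus {I : Type} (l : Cardinal.{0}) (A : I → Ordinal.{0} → Set Ordinal.{0})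
    (D : Set (Set Ordinal.{0})) (S : Set Ordinal.{0}) :
    Set (I → Option Ordinal.{0}) :=
  {x | IsFinPartialFun I l x ∧ DNull l D (S ∩ AxSet l A x) ∧
    ∀ y, IsFinPartialFun I l y → ProperRestriction y x →
      DPositive l D (S ∩ AxSet l A y)}

namespace BSetAux

variable {I : Type} {l : Cardinal.{0}}

/-- Join of two compatible partial functions. -/
def join (x y : I → Option Ordinal.{0}) : I → Option Ordinal.{0} :=
  fun i => match x i with
  | some a => some a
  | none => y i

lemma join_left {x y : I → Option Ordinal.{0}} {i : I} {a : Ordinal}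
    (h : x i = some a) : join x y i = some a := by simp [join, h]

lemma join_right {x y : I → Option Ordinal.{0}} (hc : Compatible x y) {i : I}
    {a : Ordinal} (h : y i = some a) : join x y i = some a := by
  rcases hx : x i with _ | b
  · simp [join, hx, h]
  · have := hc i b a hx h
    simp [join, hx, this]

lemma join_cases {x y : I → Option Ordinal.{0}} {i : I} {a : Ordinal}
    (h : join x y i = some a) : x i = some a ∨ y i = some a := by
  rcases hx : x i with _ | b
  · right; unfold join at h; rw [hx] at h; exact h
  · left; unfold join at h; rw [hx] at h; exact h

lemma join_fin {x y : I → Option Ordinal.{0}} (hx : IsFinPartialFun I l x)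
    (hy : IsFinPartialFun I l y) : IsFinPartialFun I l (join x y) := by
  constructor
  · apply Set.Finite.subset (hx.1.union hy.1)
    intro i hi
    simp only [Set.mem_setOf_eq] at hi ⊢
    rcases hj : join x y i with _ | a
    · exact absurd hj hi
    · rcases join_cases hj with h | h
      · exact Or.inl (by simp [h])
      · exact Or.inr (by simp [h])
  · intro i e he
    rcases join_cases he with h | h
    exacts [hx.2 i e h, hy.2 i e h]

lemma null_mono {D : Set (Set Ordinal.{0})} (hfil : IsFilterOn l D)
    {X Y : Set Ordinal.{0}} (h : X ⊆ Y) (hY : DNull l D Y) : DNull l D X := by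
  refine hfil.2.2.2.2 _ _ hY ?_ ?_
  · intro a ha; exact ⟨ha.1, fun h' => ha.2 (h h')⟩
  · intro a ha; exact ha.1

lemma axSet_subset {A : I → Ordinal.{0} → Set Ordinal.{0}}
    {z y : I → Option Ordinal.{0}} (h : ∀ i e, y i = some e → z i = some e) :
    AxSet l A z ⊆ AxSet l A y := by
  intro a ha
  exact ⟨ha.1, fun i e he => ha.2 i e (h i e he)⟩

/-- Minimal restriction lemma: any fin partial function `z` with `S ∩ A_z` null has a
restriction in `B⁺(S)`. -/
lemma exists_bplus {A : I → Ordinal.{0} → Set Ordinal.{0}}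
    {D : Set (Set Ordinal.{0})} (hfil : IsFilterOn l D) (S : Set Ordinal.{0}) :
    ∀ n (z : I → Option Ordinal.{0}), IsFinPartialFun I l z →
      {i | z i ≠ none}.ncard ≤ n → DNull l D (S ∩ AxSet l A z) →
      ∃ w ∈ BPlus l A D S, ∀ i e, w i = some e → z i = some e := by
  intro n
  induction n with
  | zero =>
    intro z hz hcard hnull
    refine ⟨z, ⟨hz, hnull, ?_⟩, fun i e he => he⟩
    intro y hy hres
    exfalso
    apply hres.2
    funext i
    rcases hyi : y i with _ | a
    · rcases hzi : z i with _ | b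
      · rfl
      · exfalso
        have : i ∈ {i | z i ≠ none} := by simp [hzi]
        have hne : ({i | z i ≠ none} : Set I).Nonempty := ⟨i, this⟩
        have := Set.ncard_pos (hz.1) |>.mpr hne
        omega
    · exact (hres.1 i a hyi).symm
  | succ n ih =>
    intro z hz hcard hnull
    by_cases hmin : ∀ y, IsFinPartialFun I l y → ProperRestriction y z →
        DPositive l D (S ∩ AxSet l A y)
    · exact ⟨z, ⟨hz, hnull, hmin⟩, fun i e he => he⟩
    · push_neg at hmin
      obtain ⟨y, hy, hres, hynull⟩ := hmin
      have hynull' : DNull l D (S ∩ AxSet l A y) := not_not.mp hynull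
      have hdsub : {i | y i ≠ none} ⊆ {i | z i ≠ none} := by
        intro i hi
        rcases hyi : y i with _ | a
        · exact absurd hyi hi
        · simp [hres.1 i a hyi]
      have hdne : {i | y i ≠ none} ≠ {i | z i ≠ none} := by
        intro heq
        apply hres.2
        funext i
        rcases hyi : y i with _ | a
        · rcases hzi : z i with _ | b
          · rfl
          · exfalso
            have hi : i ∈ {i | z i ≠ none} := by simp [hzi]
            rw [← heq] at hi
            exact hi hyi
        · exact (hres.1 i a hyi).symm
      have hlt : {i | y i ≠ none}.ncard < {i | z i ≠ none}.ncard :=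
        Set.ncard_lt_ncard (ssubset_of_subset_of_ne hdsub hdne) hz.1
      obtain ⟨w, hw, hwres⟩ := ih y hy (by omega) hynull'
      exact ⟨w, hw, fun i e he => hres.1 i e (hwres i e he)⟩

/-- The filter-extension argument: if `T ∩ A_z` is `D₀`-positive for every finite
partial function `z`, then `T ∈ D₀`, by maximality. -/
lemma gen_mem {A : I → Ordinal.{0} → Set Ordinal.{0}} {D₀ : Set (Set Ordinal.{0})}
    (hfil : IsFilterOn l D₀)
    (hclub : ∀ C, IsClubIn l C → C ∈ D₀)
    (hmax : ∀ D : Set (Set Ordinal.{0}), IsFilterOn l D →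
      (∀ C, IsClubIn l C → C ∈ D) →
      (∀ x, IsFinPartialFun I l x → DPositive l D (AxSet l A x)) →
      D₀ ⊆ D → D = D₀)
    (T : Set Ordinal.{0}) (hT : T ⊆ Set.Iio l.ord)
    (hTpos : ∀ z, IsFinPartialFun I l z → DPositive l D₀ (T ∩ AxSet l A z)) :
    T ∈ D₀ := by
  set D : Set (Set Ordinal.{0}) :=
    {B | B ⊆ Set.Iio l.ord ∧ ∃ E ∈ D₀, E ∩ T ⊆ B} with hD
  have hDpos : ∀ z, IsFinPartialFun I l z → DPositive l D (AxSet l A z) := by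
    intro z hz hnull
    obtain ⟨-, E, hE, hsub⟩ := hnull
    apply hTpos z hz
    refine hfil.2.2.2.2 _ _ hE ?_ ?_
    · intro a ha
      refine ⟨hfil.1 _ hE ha, fun hmem => ?_⟩
      have : a ∈ Set.Iio l.ord \ AxSet l A z := hsub ⟨ha, hmem.1⟩
      exact this.2 hmem.2
    · intro a ha; exact ha.1
  have hDfil : IsFilterOn l D := by
    refine ⟨fun B hB => hB.1, ⟨le_refl _, Set.Iio l.ord, hfil.2.1, fun a ha => ha.1⟩,
      ?_, ?_, ?_⟩
    · intro hemp
      have hzfin : IsFinPartialFun I l (fun _ : I => (none : Option Ordinal)) :=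
        ⟨by simp, by intro i e h; exact absurd h (by simp)⟩
      apply hDpos _ hzfin
      obtain ⟨-, E, hE, hsub⟩ := hemp
      exact ⟨fun a ha => ha.1, E, hE,
        fun a ha => absurd (hsub ha) (Set.notMem_empty a)⟩
    · rintro B₁ B₂ ⟨hB₁, E₁, hE₁, hs₁⟩ ⟨hB₂, E₂, hE₂, hs₂⟩
      refine ⟨fun a ha => hB₁ ha.1, E₁ ∩ E₂, hfil.2.2.2.1 _ _ hE₁ hE₂, ?_⟩
      intro a ha
      exact ⟨hs₁ ⟨ha.1.1, ha.2⟩, hs₂ ⟨ha.1.2, ha.2⟩⟩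
    · rintro B₁ B₂ ⟨hB₁, E, hE, hs⟩ hsub hB₂
      exact ⟨hB₂, E, hE, hs.trans hsub⟩
  have hD₀sub : D₀ ⊆ D := by
    intro E hE
    exact ⟨hfil.1 _ hE, E, hE, fun a ha => ha.1⟩
  have hDclub : ∀ C, IsClubIn l C → C ∈ D := fun C hC => hD₀sub (hclub C hC)
  have hDeq : D = D₀ := hmax D hDfil hDclub hDpos hD₀sub
  rw [← hDeq]
  exact ⟨hT, Set.Iio l.ord, hfil.2.1, fun a ha => ha.2⟩

end BSetAux

/-- Under the Setup, for every subset `S` of `λ`, the family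
`B(S) = B⁺(S) ∪ B⁺(λ \ S)` is predense: every finite partial function from `I` to `λ`
is compatible with some member of `B(S)`. -/
theorem BSet_predense (I : Type) (l : Cardinal.{0})
    (hreg : l.IsRegular) (hunc : Cardinal.aleph0 < l)
    (A : I → Ordinal.{0} → Set Ordinal.{0})
    (hsub : ∀ ξ ε, A ξ ε ⊆ Set.Iio l.ord)
    (hdisj : ∀ ξ ε₁ ε₂, ε₁ ≠ ε₂ → A ξ ε₁ ∩ A ξ ε₂ = ∅)
    (hstat : ∀ x, IsFinPartialFun I l x → IsStationaryIn l (AxSet l A x))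
    (D₀ : Set (Set Ordinal.{0}))
    (hfil : IsFilterOn l D₀)
    (hclub : ∀ C, IsClubIn l C → C ∈ D₀)
    (hpos : ∀ x, IsFinPartialFun I l x → DPositive l D₀ (AxSet l A x))
    (hmax : ∀ D : Set (Set Ordinal.{0}), IsFilterOn l D →
      (∀ C, IsClubIn l C → C ∈ D) →
      (∀ x, IsFinPartialFun I l x → DPositive l D (AxSet l A x)) →
      D₀ ⊆ D → D = D₀)
    (S : Set Ordinal.{0}) (hS : S ⊆ Set.Iio l.ord) :
    ∀ x, IsFinPartialFun I l x →
      ∃ y ∈ BPlus l A D₀ S ∪ BPlus l A D₀ (Set.Iio l.ord \ S), Compatible x y := by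
  classical
  intro x hx
  by_cases hcase : ∀ z, IsFinPartialFun I l z → Compatible x z →
      DPositive l D₀ (S ∩ AxSet l A z) ∧
      DPositive l D₀ ((Set.Iio l.ord \ S) ∩ AxSet l A z)
  · exfalso
    -- In this case the maximality of D₀ forces A_x to be null, contradiction.
    have key : ∀ S' : Set Ordinal.{0}, S' ⊆ Set.Iio l.ord →
        (∀ z, IsFinPartialFun I l z → Compatible x z →
          DPositive l D₀ (S' ∩ AxSet l A z)) →
        S' ∪ (Set.Iio l.ord \ AxSet l A x) ∈ D₀ := by
      intro S' hS' hS'pos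
      apply BSetAux.gen_mem hfil hclub hmax
      · intro a ha
        rcases ha with h | h
        · exact hS' h
        · exact h.1
      · intro z hz hnull
        by_cases hcomp : Compatible x z
        · apply hS'pos z hz hcomp
          apply BSetAux.null_mono hfil ?_ hnull
          intro a ha
          exact ⟨Or.inl ha.1, ha.2⟩
        · -- incompatible: A_x ∩ A_z = ∅, so A_z ⊆ (λ \ A_x) and A_z is positive
          simp only [Compatible, not_forall] at hcomp
          obtain ⟨i, a, b, hxi, hzi, hab⟩ := hcomp
          apply hpos z hz
          apply BSetAux.null_mono hfil ?_ hnull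
          intro c hc
          refine ⟨Or.inr ⟨hc.1, fun hcx => ?_⟩, hc⟩
          have h1 : c ∈ A i a := hcx.2 i a hxi
          have h2 : c ∈ A i b := hc.2 i b hzi
          have hmem : c ∈ A i a ∩ A i b := ⟨h1, h2⟩
          rw [hdisj i a b hab] at hmem
          exact Set.notMem_empty c hmem
    have hT1 : S ∪ (Set.Iio l.ord \ AxSet l A x) ∈ D₀ :=
      key S hS (fun z hz hc => (hcase z hz hc).1)
    have hT2 : (Set.Iio l.ord \ S) ∪ (Set.Iio l.ord \ AxSet l A x) ∈ D₀ :=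
      key _ (fun a ha => ha.1) (fun z hz hc => (hcase z hz hc).2)
    have hInt := hfil.2.2.2.1 _ _ hT1 hT2
    have hsubm : (S ∪ (Set.Iio l.ord \ AxSet l A x)) ∩
        ((Set.Iio l.ord \ S) ∪ (Set.Iio l.ord \ AxSet l A x)) ⊆
        Set.Iio l.ord \ AxSet l A x := by
      rintro a ⟨h1 | h1, h2 | h2⟩
      · exact absurd h1 h2.2
      · exact h2
      · exact h1
      · exact h1
    have hnullAx : Set.Iio l.ord \ AxSet l A x ∈ D₀ :=
      hfil.2.2.2.2 _ _ hInt hsubm (fun a ha => ha.1)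
    exact hpos x hx hnullAx
  · push_neg at hcase
    obtain ⟨z, hz, hzc, hnull⟩ := hcase
    -- hnull : ¬(P ∧ Q); so one of the two sets is D₀-null
    have hdisj' : ¬ DPositive l D₀ (S ∩ AxSet l A z) ∨
        ¬ DPositive l D₀ ((Set.Iio l.ord \ S) ∩ AxSet l A z) := by
      by_cases hP : DPositive l D₀ (S ∩ AxSet l A z)
      · exact Or.inr (hnull hP)
      · exact Or.inl hP
    rcases hdisj' with h | h
    · -- S ∩ A_z is null; pass to join x z and extract minimal restriction
      have hSnull : DNull l D₀ (S ∩ AxSet l A z) := not_not.mp h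
      have hwfin : IsFinPartialFun I l (BSetAux.join x z) := BSetAux.join_fin hx hz
      have hwnull : DNull l D₀ (S ∩ AxSet l A (BSetAux.join x z)) := by
        apply BSetAux.null_mono hfil ?_ hSnull
        exact Set.inter_subset_inter_right _
          (BSetAux.axSet_subset (fun i e he => BSetAux.join_right hzc he))
      obtain ⟨w, hw, hwres⟩ := BSetAux.exists_bplus hfil S
        {i | BSetAux.join x z i ≠ none}.ncard (BSetAux.join x z) hwfin le_rfl hwnull
      refine ⟨w, Or.inl hw, ?_⟩
      intro i a b hxi hwi
      have h1 : BSetAux.join x z i = some a := BSetAux.join_left hxi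
      have h2 : BSetAux.join x z i = some b := hwres i b hwi
      rw [h1] at h2
      exact (Option.some.injEq _ _ ▸ h2 : a = b)
    · have hSnull : DNull l D₀ ((Set.Iio l.ord \ S) ∩ AxSet l A z) := not_not.mp h
      have hwfin : IsFinPartialFun I l (BSetAux.join x z) := BSetAux.join_fin hx hz
      have hwnull : DNull l D₀ ((Set.Iio l.ord \ S) ∩ AxSet l A (BSetAux.join x z)) := by
        apply BSetAux.null_mono hfil ?_ hSnull
        exact Set.inter_subset_inter_right _
          (BSetAux.axSet_subset (fun i e he => BSetAux.join_right hzc he))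
      obtain ⟨w, hw, hwres⟩ := BSetAux.exists_bplus hfil (Set.Iio l.ord \ S)
        {i | BSetAux.join x z i ≠ none}.ncard (BSetAux.join x z) hwfin le_rfl hwnull
      refine ⟨w, Or.inr hw, ?_⟩
      intro i a b hxi hwi
      have h1 : BSetAux.join x z i = some a := BSetAux.join_left hxi
      have h2 : BSetAux.join x z i = some b := hwres i b hwi
      rw [h1] at h2
      exact (Option.some.injEq _ _ ▸ h2 : a = b)
end

section
/- Assume the Setup. For a set A ⊆ λ, let B⁺(A) be the collection of finite partial functions x from I to λ such that A ∩ A_x is D₀-null while A ∩ A_y is D₀-positive for every proper restriction y of x, and let B(A) = B⁺(A) ∪ B⁺(λ ∖ A). Then for every A ⊆ λ, the collection B(A) has cardinality at most λ. -/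
section BSetAux

open Cardinal Set

variable {I : Type} {l : Cardinal.{0}} {A : I → Ordinal.{0} → Set Ordinal.{0}}
  {D₀ : Set (Set Ordinal.{0})}

lemma axSet_mono {y w : I → Option Ordinal.{0}}
    (h : ∀ i e, y i = some e → w i = some e) : AxSet l A w ⊆ AxSet l A y :=
  fun a ha => ⟨ha.1, fun i e hy => ha.2 i e (h i e hy)⟩

lemma null_mono (hfil : IsFilterOn l D₀) {X Y : Set Ordinal.{0}}
    (hXY : X ⊆ Y) (hY : DNull l D₀ Y) : DNull l D₀ X :=
  hfil.2.2.2.2 _ _ hY (Set.diff_subset_diff_right hXY) Set.diff_subset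

lemma null_union (hfil : IsFilterOn l D₀) {X Y : Set Ordinal.{0}}
    (hX : DNull l D₀ X) (hY : DNull l D₀ Y) : DNull l D₀ (X ∪ Y) := by
  have := hfil.2.2.2.1 _ _ hX hY
  rwa [Set.diff_inter_diff] at this

/-- Key consequence of maximality of `D₀`: if `S ∩ A_r` is `D₀`-positive, then there is a
finite partial function `z` such that `A_z \ (S ∩ A_r)` is `D₀`-null. -/
lemma exists_null_diff
    (hfil : IsFilterOn l D₀)
    (hclub : ∀ C, IsClubIn l C → C ∈ D₀)
    (hmax : ∀ D : Set (Set Ordinal.{0}), IsFilterOn l D →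
      (∀ C, IsClubIn l C → C ∈ D) →
      (∀ x, IsFinPartialFun I l x → DPositive l D (AxSet l A x)) →
      D₀ ⊆ D → D = D₀)
    {S : Set Ordinal.{0}} (hS : S ⊆ Set.Iio l.ord)
    {r : I → Option Ordinal.{0}}
    (hrpos : DPositive l D₀ (S ∩ AxSet l A r)) :
    ∃ z, IsFinPartialFun I l z ∧ DNull l D₀ (AxSet l A z \ (S ∩ AxSet l A r)) := by
  set T : Set Ordinal.{0} := S ∩ AxSet l A r with hT
  have hTsub : T ⊆ Set.Iio l.ord := fun a ha => hS ha.1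
  by_cases hmem : T ∈ D₀
  · refine ⟨fun _ => none, ⟨by simp, by simp⟩, ?_⟩
    have hAx : AxSet l A (fun _ => none : I → Option Ordinal.{0}) = Set.Iio l.ord := by
      ext a; simp [AxSet, Set.mem_Iio]
    rw [DNull, hAx, Set.diff_diff_right_self, Set.inter_eq_self_of_subset_right hTsub]
    exact hmem
  · set D' : Set (Set Ordinal.{0}) :=
      {B | B ⊆ Set.Iio l.ord ∧ ∃ E ∈ D₀, E ∩ (Set.Iio l.ord \ T) ⊆ B} with hD'
    have hsubD : D₀ ⊆ D' := fun E hE =>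
      ⟨hfil.1 E hE, E, hE, Set.inter_subset_left⟩
    have hfil' : IsFilterOn l D' := by
      refine ⟨fun B hB => hB.1, hsubD hfil.2.1, ?_, ?_, ?_⟩
      · rintro ⟨-, E, hE, hsub⟩
        apply hmem
        refine hfil.2.2.2.2 E T hE ?_ hTsub
        intro a ha
        by_contra haT
        exact (hsub ⟨ha, hfil.1 E hE ha, haT⟩).elim
      · rintro B₁ B₂ ⟨h1, E₁, hE₁, hs₁⟩ ⟨h2, E₂, hE₂, hs₂⟩
        refine ⟨fun a ha => h1 ha.1, E₁ ∩ E₂, hfil.2.2.2.1 _ _ hE₁ hE₂, ?_⟩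
        rintro a ⟨⟨ha1, ha2⟩, ha3⟩
        exact ⟨hs₁ ⟨ha1, ha3⟩, hs₂ ⟨ha2, ha3⟩⟩
      · rintro B₁ B₂ ⟨h1, E, hE, hs⟩ hBB hB₂
        exact ⟨hB₂, E, hE, hs.trans hBB⟩
    have hclub' : ∀ C, IsClubIn l C → C ∈ D' := fun C hC => hsubD (hclub C hC)
    by_cases hall : ∀ x, IsFinPartialFun I l x → DPositive l D' (AxSet l A x)
    · exfalso
      have hDe : D' = D₀ := hmax D' hfil' hclub' hall hsubD
      apply hrpos
      have : Set.Iio l.ord \ T ∈ D' :=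
        ⟨Set.diff_subset, Set.Iio l.ord, hfil.2.1, Set.inter_subset_right⟩
      rwa [hDe] at this
    · push_neg at hall
      obtain ⟨z, hzfin, hznull⟩ := hall
      rw [DPositive, not_not] at hznull
      obtain ⟨-, E, hE, hs⟩ := hznull
      refine ⟨z, hzfin, ?_⟩
      refine hfil.2.2.2.2 E _ hE ?_ Set.diff_subset
      intro a haE
      have haI : a ∈ Set.Iio l.ord := hfil.1 E hE haE
      refine ⟨haI, fun hmem' => ?_⟩
      have : a ∈ Set.Iio l.ord \ AxSet l A z := hs ⟨haE, haI, hmem'.2⟩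
      exact this.2 hmem'.1

/-- Conflict lemma: if `S ∩ A_x` is null, `r` is a restriction of `x`, and
`A_z \ (S ∩ A_r)` is null, then `x` has a coordinate outside `dom r` lying in `dom z`. -/
lemma exists_new_point
    (hfil : IsFilterOn l D₀)
    (hdisj : ∀ ξ ε₁ ε₂, ε₁ ≠ ε₂ → A ξ ε₁ ∩ A ξ ε₂ = ∅)
    (hpos : ∀ x, IsFinPartialFun I l x → DPositive l D₀ (AxSet l A x))
    {S : Set Ordinal.{0}}
    {x : I → Option Ordinal.{0}} (hxfin : IsFinPartialFun I l x)
    (hxnull : DNull l D₀ (S ∩ AxSet l A x))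
    {r : I → Option Ordinal.{0}} (hr : ∀ i e, r i = some e → x i = some e)
    {z : I → Option Ordinal.{0}} (hzfin : IsFinPartialFun I l z)
    (hznull : DNull l D₀ (AxSet l A z \ (S ∩ AxSet l A r))) :
    ∃ i, x i ≠ none ∧ r i = none ∧ z i ≠ none := by
  by_contra hcon
  push_neg at hcon
  by_cases hconf : ∃ i e e', r i = some e ∧ z i = some e' ∧ e ≠ e'
  · obtain ⟨i, e, e', hri, hzi, hne⟩ := hconf
    apply hpos z hzfin
    refine null_mono hfil ?_ hznull
    intro a ha
    refine ⟨ha, fun hmem => ?_⟩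
    have h1 : a ∈ A i e' := ha.2 i e' hzi
    have h2 : a ∈ A i e := hmem.2.2 i e hri
    have := hdisj i e' e (Ne.symm hne)
    exact absurd (Set.mem_inter h1 h2) (by rw [this]; exact Set.notMem_empty a)
  · push_neg at hconf
    classical
    set w : I → Option Ordinal.{0} := fun i => match x i with
      | some e => some e
      | none => z i with hw
    have hwx : ∀ i e, x i = some e → w i = some e := by
      intro i e h; simp only [hw]; rw [h]
    have hwz : ∀ i e, z i = some e → w i = some e := by
      intro i e h
      simp only [hw]
      cases hxi : x i with
      | none => exact h
      | some e'' =>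
        have hxne : x i ≠ none := by rw [hxi]; exact Option.some_ne_none _
        have hrne : r i ≠ none := by
          intro hrn
          have := hcon i hxne hrn
          rw [this] at h; exact Option.some_ne_none _ h.symm
        obtain ⟨e₀, hre₀⟩ := Option.ne_none_iff_exists'.mp hrne
        have hxe₀ := hr i e₀ hre₀
        rw [hxi] at hxe₀
        have : e₀ = e'' := Option.some_injective _ hxe₀.symm
        have he : e₀ = e := hconf i e₀ e hre₀ h
        rw [← he, ← this]
    have hwfin : IsFinPartialFun I l w := by
      constructor
      · apply Set.Finite.subset (hxfin.1.union hzfin.1)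
        intro i hi
        simp only [Set.mem_setOf_eq, hw] at hi ⊢
        cases hxi : x i with
        | none => right; rw [hxi] at hi; exact hi
        | some e =>
          left; show x i ≠ none; rw [hxi]; exact Option.some_ne_none _
      · intro i e he
        simp only [hw] at he
        cases hxi : x i with
        | none => rw [hxi] at he; exact hzfin.2 i e he
        | some e'' =>
          rw [hxi] at he
          have : e'' = e := Option.some_injective _ he
          exact this ▸ hxfin.2 i e'' hxi
    apply hpos w hwfin
    have hsub : AxSet l A w ⊆
        (AxSet l A z \ (S ∩ AxSet l A r)) ∪ (S ∩ AxSet l A x) := by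
      intro a ha
      have haz : a ∈ AxSet l A z := axSet_mono hwz ha
      have hax : a ∈ AxSet l A x := axSet_mono hwx ha
      by_cases haS : a ∈ S ∩ AxSet l A r
      · exact Or.inr ⟨haS.1, hax⟩
      · exact Or.inl ⟨haz, haS⟩
    exact null_mono hfil hsub (null_union hfil hznull hxnull)

end BSetAux

/-- Levels of a tree of elements of `α` generated from `root` by the step function `F`,
where at each step one chooses a natural number and an ordinal below `l.ord`. -/
def TreeLevel {α : Type 1} (l : Cardinal.{0}) (F : α → ℕ → Ordinal.{0} → α)
    (root : α) : ℕ → Set α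
  | 0 => {root}
  | (k+1) => {w | ∃ r ∈ TreeLevel l F root k, ∃ n : ℕ, ∃ e, e < l.ord ∧ w = F r n e}

lemma treeLevel_card_le {α : Type 1} (l : Cardinal.{0}) (F : α → ℕ → Ordinal.{0} → α)
    (root : α) (hl : Cardinal.aleph0 ≤ Cardinal.lift.{1} l) :
    ∀ k, Cardinal.mk ↥(TreeLevel l F root k) ≤ Cardinal.lift.{1} l := by
  intro k
  induction k with
  | zero =>
      have h1 : Cardinal.mk ↥(TreeLevel l F root 0) = 1 := by
        simp [TreeLevel]
      rw [h1]
      exact le_trans Cardinal.one_lt_aleph0.le hl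
  | succ k ih =>
      set φ : ↥(TreeLevel l F root k) × ULift.{1} ℕ × ↥(Set.Iio l.ord) → α :=
        fun p => F p.1.1 p.2.1.down p.2.2.1 with hφ
      have hsub : TreeLevel l F root (k+1) ⊆ Set.range φ := by
        rintro w ⟨r, hr, n, e, he, rfl⟩
        exact ⟨⟨⟨r, hr⟩, ⟨n⟩, ⟨e, he⟩⟩, rfl⟩
      have h2 : Cardinal.mk ↥(TreeLevel l F root (k+1)) ≤
          Cardinal.mk (↥(TreeLevel l F root k) × ULift.{1} ℕ × ↥(Set.Iio l.ord)) :=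
        le_trans (Cardinal.mk_le_mk_of_subset hsub) Cardinal.mk_range_le
      have h3 : Cardinal.mk (↥(TreeLevel l F root k) × ULift.{1} ℕ × ↥(Set.Iio l.ord))
          = Cardinal.mk ↥(TreeLevel l F root k) *
            (Cardinal.aleph0 * Cardinal.lift.{1} l) := by
        simp [Cardinal.mk_prod, Cardinal.mk_uLift, Ordinal.mk_Iio_ordinal,
          Cardinal.card_ord]
      refine le_trans h2 (le_trans (le_of_eq h3) ?_)
      calc Cardinal.mk ↥(TreeLevel l F root k) *
            (Cardinal.aleph0 * Cardinal.lift.{1} l)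
          ≤ Cardinal.lift.{1} l * (Cardinal.lift.{1} l * Cardinal.lift.{1} l) :=
            mul_le_mul' ih (mul_le_mul' hl le_rfl)
        _ = Cardinal.lift.{1} l := by
            rw [Cardinal.mul_eq_self hl, Cardinal.mul_eq_self hl]

/-- The main estimate: under the Setup, `B⁺(S)` has cardinality at most `λ`. -/
lemma bplus_card_le (I : Type) (l : Cardinal.{0})
    (hunc : Cardinal.aleph0 < l)
    (A : I → Ordinal.{0} → Set Ordinal.{0})
    (hdisj : ∀ ξ ε₁ ε₂, ε₁ ≠ ε₂ → A ξ ε₁ ∩ A ξ ε₂ = ∅)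
    (D₀ : Set (Set Ordinal.{0}))
    (hfil : IsFilterOn l D₀)
    (hclub : ∀ C, IsClubIn l C → C ∈ D₀)
    (hpos : ∀ x, IsFinPartialFun I l x → DPositive l D₀ (AxSet l A x))
    (hmax : ∀ D : Set (Set Ordinal.{0}), IsFilterOn l D →
      (∀ C, IsClubIn l C → C ∈ D) →
      (∀ x, IsFinPartialFun I l x → DPositive l D (AxSet l A x)) →
      D₀ ⊆ D → D = D₀)
    (S : Set Ordinal.{0}) (hS : S ⊆ Set.Iio l.ord) :
    Cardinal.mk ↥(BPlus l A D₀ S) ≤ Cardinal.lift.{1} l := by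
  classical
  have hl : Cardinal.aleph0 ≤ Cardinal.lift.{1} l := by
    rw [← Cardinal.lift_aleph0.{1, 0}]
    exact Cardinal.lift_le.mpr hunc.le
  have hgex : ∀ r : I → Option Ordinal.{0}, ∃ z, IsFinPartialFun I l z ∧
      (DPositive l D₀ (S ∩ AxSet l A r) →
        DNull l D₀ (AxSet l A z \ (S ∩ AxSet l A r))) := by
    intro r
    by_cases hp : DPositive l D₀ (S ∩ AxSet l A r)
    · obtain ⟨z, h1, h2⟩ := exists_null_diff hfil hclub hmax hS hp
      exact ⟨z, h1, fun _ => h2⟩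
    · exact ⟨fun _ => none, ⟨by simp, by simp⟩, fun h => absurd h hp⟩
  choose g hgfin hgnull using hgex
  set en : (I → Option Ordinal.{0}) → ℕ → Option I :=
    fun r n => ((hgfin r).1.toFinset.toList)[n]? with hen
  have hen_spec : ∀ r i, g r i ≠ none → ∃ n : ℕ, en r n = some i := by
    intro r i hi
    have : i ∈ (hgfin r).1.toFinset.toList := by
      rw [Finset.mem_toList, Set.Finite.mem_toFinset]
      exact hi
    exact List.mem_iff_getElem?.mp this
  set F : (I → Option Ordinal.{0}) → ℕ → Ordinal.{0} → (I → Option Ordinal.{0}) :=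
    fun r n e => match en r n with
      | some i => Function.update r i (some e)
      | none => r
    with hF
  have hFeq : ∀ r n e i, en r n = some i → F r n e = Function.update r i (some e) := by
    intro r n e i h
    simp only [hF, h]
  set root : I → Option Ordinal.{0} := fun _ => none with hroot
  have main : ∀ n : ℕ, ∀ x ∈ BPlus l A D₀ S, ∀ k, ∀ r,
      r ∈ TreeLevel l F root k →
      (∀ i e, r i = some e → x i = some e) →
      {i | x i ≠ none ∧ r i = none}.ncard = n →
      ∃ m, x ∈ TreeLevel l F root m := by
    intro n
    induction n with
    | zero =>
        intro x hx k r hrk hr hcard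
        have hsfin : {i | x i ≠ none ∧ r i = none}.Finite :=
          hx.1.1.subset (fun i hi => hi.1)
        have hempty : {i | x i ≠ none ∧ r i = none} = ∅ :=
          (Set.ncard_eq_zero hsfin).mp hcard
        have hrx : r = x := by
          funext i
          cases hri : r i with
          | some e' =>
              rw [hr i e' hri]
          | none =>
              cases hxi : x i with
              | none => rfl
              | some e =>
                  exfalso
                  have : i ∈ {i | x i ≠ none ∧ r i = none} :=
                    ⟨by rw [hxi]; exact Option.some_ne_none _, hri⟩
                  rw [hempty] at this
                  exact this
        exact ⟨k, hrx ▸ hrk⟩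
    | succ n ih =>
        intro x hx k r hrk hr hcard
        have hsne : {i | x i ≠ none ∧ r i = none}.Nonempty :=
          Set.nonempty_of_ncard_ne_zero (by rw [hcard]; exact Nat.succ_ne_zero n)
        obtain ⟨i₀, hi₀⟩ := hsne
        have hrneq : r ≠ x := by
          intro h
          rw [h] at hi₀
          exact hi₀.1 hi₀.2
        have hrfin : IsFinPartialFun I l r := by
          constructor
          · apply hx.1.1.subset
            intro i hi
            obtain ⟨e, he⟩ := Option.ne_none_iff_exists'.mp hi
            have hxe := hr i e he
            rw [Set.mem_setOf_eq, hxe]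
            exact Option.some_ne_none _
          · intro i e he
            exact hx.1.2 i e (hr i e he)
        have hrpos : DPositive l D₀ (S ∩ AxSet l A r) :=
          hx.2.2 r hrfin ⟨hr, hrneq⟩
        obtain ⟨i, hxi, hri, hgi⟩ :=
          exists_new_point hfil hdisj hpos hx.1 hx.2.1 hr (hgfin r) (hgnull r hrpos)
        obtain ⟨e, he⟩ := Option.ne_none_iff_exists'.mp hxi
        obtain ⟨nn, hnn⟩ := hen_spec r i hgi
        have helt : e < l.ord := hx.1.2 i e he
        have hr'mem : Function.update r i (some e) ∈ TreeLevel l F root (k+1) :=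
          ⟨r, hrk, nn, e, helt, (hFeq r nn e i hnn).symm⟩
        have hr'res : ∀ j e', Function.update r i (some e) j = some e' →
            x j = some e' := by
          intro j e' hj
          rcases eq_or_ne j i with rfl | hji
          · rw [Function.update_self] at hj
            rw [he, hj]
          · rw [Function.update_of_ne hji] at hj
            exact hr j e' hj
        have hset : {j | x j ≠ none ∧ Function.update r i (some e) j = none} =
            {j | x j ≠ none ∧ r j = none} \ {i} := by
          ext j
          simp only [Set.mem_setOf_eq, Set.mem_diff, Set.mem_singleton_iff]
          constructor
          · rintro ⟨h1, h2⟩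
            rcases eq_or_ne j i with rfl | hji
            · rw [Function.update_self] at h2
              exact absurd h2 (Option.some_ne_none _)
            · rw [Function.update_of_ne hji] at h2
              exact ⟨⟨h1, h2⟩, hji⟩
          · rintro ⟨⟨h1, h2⟩, hji⟩
            refine ⟨h1, ?_⟩
            rw [Function.update_of_ne hji]
            exact h2
        have hsfin : {j | x j ≠ none ∧ r j = none}.Finite :=
          hx.1.1.subset fun j hj => hj.1
        have hcard' : {j | x j ≠ none ∧ Function.update r i (some e) j = none}.ncard
            = n := by
          have hmem : i ∈ {j | x j ≠ none ∧ r j = none} := ⟨hxi, hri⟩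
          rw [hset, Set.ncard_diff_singleton_of_mem hmem, hcard]
          omega
        exact ih x hx (k+1) _ hr'mem hr'res hcard'
  have hsubU : BPlus l A D₀ S ⊆ ⋃ (u : ULift.{1} ℕ), TreeLevel l F root u.down := by
    intro x hx
    have hroot0 : root ∈ TreeLevel l F root 0 := by simp [TreeLevel]
    obtain ⟨m, hm⟩ := main _ x hx 0 root hroot0
      (fun i e h => (Option.some_ne_none _ h.symm).elim) rfl
    exact Set.mem_iUnion.mpr ⟨⟨m⟩, hm⟩
  calc Cardinal.mk ↥(BPlus l A D₀ S)
      ≤ Cardinal.mk ↥(⋃ (u : ULift.{1} ℕ), TreeLevel l F root u.down) :=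
        Cardinal.mk_le_mk_of_subset hsubU
    _ ≤ Cardinal.mk (ULift.{1} ℕ) *
        ⨆ u : ULift.{1} ℕ, Cardinal.mk ↥(TreeLevel l F root u.down) :=
        Cardinal.mk_iUnion_le _
    _ ≤ Cardinal.aleph0 * Cardinal.lift.{1} l := by
        apply mul_le_mul'
        · exact le_of_eq (by simp)
        · exact ciSup_le' fun u => treeLevel_card_le l F root hl u.down
    _ ≤ Cardinal.lift.{1} l * Cardinal.lift.{1} l := mul_le_mul' hl le_rfl
    _ = Cardinal.lift.{1} l := Cardinal.mul_eq_self hl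

/-- Under the Setup, for every subset `S` of `λ`, the family
`B(S) = B⁺(S) ∪ B⁺(λ \ S)` has cardinality at most `λ`. -/
theorem card_BSet_le (I : Type) (l : Cardinal.{0})
    (hreg : l.IsRegular) (hunc : Cardinal.aleph0 < l)
    (A : I → Ordinal.{0} → Set Ordinal.{0})
    (hsub : ∀ ξ ε, A ξ ε ⊆ Set.Iio l.ord)
    (hdisj : ∀ ξ ε₁ ε₂, ε₁ ≠ ε₂ → A ξ ε₁ ∩ A ξ ε₂ = ∅)
    (hstat : ∀ x, IsFinPartialFun I l x → IsStationaryIn l (AxSet l A x))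
    (D₀ : Set (Set Ordinal.{0}))
    (hfil : IsFilterOn l D₀)
    (hclub : ∀ C, IsClubIn l C → C ∈ D₀)
    (hpos : ∀ x, IsFinPartialFun I l x → DPositive l D₀ (AxSet l A x))
    (hmax : ∀ D : Set (Set Ordinal.{0}), IsFilterOn l D →
      (∀ C, IsClubIn l C → C ∈ D) →
      (∀ x, IsFinPartialFun I l x → DPositive l D (AxSet l A x)) →
      D₀ ⊆ D → D = D₀)
    (S : Set Ordinal.{0}) (hS : S ⊆ Set.Iio l.ord) :
    Cardinal.mk ↥(BPlus l A D₀ S ∪ BPlus l A D₀ (Set.Iio l.ord \ S)) ≤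
      Cardinal.lift.{1} l := by
  have hl : Cardinal.aleph0 ≤ Cardinal.lift.{1} l := by
    rw [← Cardinal.lift_aleph0.{1, 0}]
    exact Cardinal.lift_le.mpr hunc.le
  have h1 := bplus_card_le I l hunc A hdisj D₀ hfil hclub hpos hmax S hS
  have h2 := bplus_card_le I l hunc A hdisj D₀ hfil hclub hpos hmax
    (Set.Iio l.ord \ S) Set.diff_subset
  calc Cardinal.mk ↥(BPlus l A D₀ S ∪ BPlus l A D₀ (Set.Iio l.ord \ S))
      ≤ Cardinal.mk ↥(BPlus l A D₀ S) +
        Cardinal.mk ↥(BPlus l A D₀ (Set.Iio l.ord \ S)) :=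
        Cardinal.mk_union_le _ _
    _ ≤ Cardinal.lift.{1} l + Cardinal.lift.{1} l := add_le_add h1 h2
    _ = Cardinal.lift.{1} l := Cardinal.add_eq_self hl
end

section
/- Assume the Setup. Then the quotient Boolean algebra P(λ)/D₀ satisfies the λ⁺-chain condition; concretely, if S is a family of D₀-positive subsets of λ such that for any two distinct members A, B ∈ S the intersection A ∩ B is D₀-null, then |S| ≤ λ. -/
/-- Under the Setup, the quotient Boolean algebra `P(λ)/D₀` satisfies the `λ⁺`-chain
condition: any family of `D₀`-positive subsets of `λ` whose pairwise intersections are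
`D₀`-null has cardinality at most `λ`. -/
theorem quotient_lambda_plus_cc (I : Type) (l : Cardinal.{0})
    (hreg : l.IsRegular) (hunc : Cardinal.aleph0 < l)
    (A : I → Ordinal.{0} → Set Ordinal.{0})
    (hsub : ∀ ξ ε, A ξ ε ⊆ Set.Iio l.ord)
    (hdisj : ∀ ξ ε₁ ε₂, ε₁ ≠ ε₂ → A ξ ε₁ ∩ A ξ ε₂ = ∅)
    (hstat : ∀ x, IsFinPartialFun I l x → IsStationaryIn l (AxSet l A x))
    (D₀ : Set (Set Ordinal.{0}))
    (hfil : IsFilterOn l D₀)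
    (hclub : ∀ C, IsClubIn l C → C ∈ D₀)
    (hpos : ∀ x, IsFinPartialFun I l x → DPositive l D₀ (AxSet l A x))
    (hmax : ∀ D : Set (Set Ordinal.{0}), IsFilterOn l D →
      (∀ C, IsClubIn l C → C ∈ D) →
      (∀ x, IsFinPartialFun I l x → DPositive l D (AxSet l A x)) →
      D₀ ⊆ D → D = D₀)
    (S : Set (Set Ordinal.{0}))
    (hSsub : ∀ B ∈ S, B ⊆ Set.Iio l.ord)
    (hSpos : ∀ B ∈ S, DPositive l D₀ B)
    (hSnull : ∀ B₁ ∈ S, ∀ B₂ ∈ S, B₁ ≠ B₂ → DNull l D₀ (B₁ ∩ B₂)) :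
    Cardinal.mk ↥S ≤ Cardinal.lift.{1} l := by
  classical
  obtain ⟨hDsub, hDtop, hDne, hDint, hDup⟩ := hfil
  have hfil' : IsFilterOn l D₀ := ⟨hDsub, hDtop, hDne, hDint, hDup⟩
  -- the empty partial function
  have hxe : IsFinPartialFun I l (fun _ : I => (none : Option Ordinal.{0})) := by
    constructor
    · simp
    · intro i e h; simp at h
  -- Key claim: for every D₀-positive B ⊆ λ there is x with A_x \ B null.
  have key : ∀ B ∈ S, ∃ x, IsFinPartialFun I l x ∧
      Set.Iio l.ord \ (AxSet l A x \ B) ∈ D₀ := by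
    intro B hB
    by_contra hcon
    push_neg at hcon
    have hBIio : B ⊆ Set.Iio l.ord := hSsub B hB
    set N : Set Ordinal.{0} := Set.Iio l.ord \ B with hN
    -- B ∉ D₀
    have hBnotD : B ∉ D₀ := by
      intro hBD
      refine hcon _ hxe ?_
      refine hDup B _ hBD ?_ Set.diff_subset
      intro a ha
      exact ⟨hBIio ha, fun h => h.2 ha⟩
    set D' : Set (Set Ordinal.{0}) :=
      {E | E ⊆ Set.Iio l.ord ∧ ∃ F ∈ D₀, F ∩ N ⊆ E} with hD'
    have hsubD : D₀ ⊆ D' := fun E hE => ⟨hDsub E hE, E, hE, Set.inter_subset_left⟩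
    have hfilD' : IsFilterOn l D' := by
      refine ⟨fun E hE => hE.1, hsubD hDtop, ?_, ?_, ?_⟩
      · rintro ⟨-, F, hF, hFN⟩
        have hFB : F ⊆ B := by
          intro a haF
          by_contra haB
          exact hFN ⟨haF, hDsub F hF haF, haB⟩
        exact hBnotD (hDup F B hF hFB hBIio)
      · rintro E₁ E₂ ⟨h₁, F₁, hF₁, hFN₁⟩ ⟨h₂, F₂, hF₂, hFN₂⟩
        refine ⟨fun a ha => h₁ ha.1, F₁ ∩ F₂, hDint _ _ hF₁ hF₂, ?_⟩
        rintro a ⟨⟨ha₁, ha₂⟩, haN⟩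
        exact ⟨hFN₁ ⟨ha₁, haN⟩, hFN₂ ⟨ha₂, haN⟩⟩
      · rintro E₁ E₂ ⟨-, F, hF, hFN⟩ hE₁₂ hE₂
        exact ⟨hE₂, F, hF, fun a ha => hE₁₂ (hFN ha)⟩
    have hclubD' : ∀ C, IsClubIn l C → C ∈ D' := fun C hC => hsubD (hclub C hC)
    have hposD' : ∀ x, IsFinPartialFun I l x → DPositive l D' (AxSet l A x) := by
      intro x hx hnull
      obtain ⟨-, F, hF, hFN⟩ := hnull
      refine hcon x hx ?_
      refine hDup F _ hF ?_ Set.diff_subset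
      intro a haF
      refine ⟨hDsub F hF haF, ?_⟩
      rintro ⟨haA, haB⟩
      exact (hFN ⟨haF, hDsub F hF haF, haB⟩).2 haA
    have hD'eq : D' = D₀ := hmax D' hfilD' hclubD' hposD' hsubD
    have hND' : N ∈ D' := ⟨Set.diff_subset, Set.Iio l.ord, hDtop, Set.inter_subset_right⟩
    rw [hD'eq] at hND'
    exact hSpos B hB hND'
  choose x hxfin hxnull using key
  -- each A_{x B} is nonempty
  have hne : ∀ B (hB : B ∈ S), (AxSet l A (x B hB)).Nonempty := by
    intro B hB
    rcases Set.eq_empty_or_nonempty (AxSet l A (x B hB)) with h | h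
    · exfalso
      refine hpos _ (hxfin B hB) ?_
      unfold DNull
      rw [h, Set.diff_empty]
      exact hDtop
    · exact h
  choose p hp using hne
  -- incompatibility of the chosen partial functions for distinct members of S
  have hincomp : ∀ B₁ (h₁ : B₁ ∈ S), ∀ B₂ (h₂ : B₂ ∈ S), B₁ ≠ B₂ →
      ¬ Compatible (x B₁ h₁) (x B₂ h₂) := by
    intro B₁ h₁ B₂ h₂ hne12 hcompat
    set x₁ := x B₁ h₁
    set x₂ := x B₂ h₂
    set z : I → Option Ordinal.{0} := fun i => (x₁ i).elim (x₂ i) some with hz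
    have hzfin : IsFinPartialFun I l z := by
      constructor
      · refine Set.Finite.subset ((hxfin B₁ h₁).1.union (hxfin B₂ h₂).1) ?_
        intro i hi
        simp only [Set.mem_setOf_eq, hz] at hi ⊢
        cases h : x₁ i with
        | none => right; rw [h] at hi; exact hi
        | some a =>
          left
          show x₁ i ≠ none
          rw [h]
          simp
      · intro i e he
        simp only [hz] at he
        cases h : x₁ i with
        | none => rw [h] at he; exact (hxfin B₂ h₂).2 i e he
        | some a =>
          rw [h] at he; simp at he
          subst he
          exact (hxfin B₁ h₁).2 i a h
    have hz1 : AxSet l A z ⊆ AxSet l A x₁ := by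
      rintro a ⟨hal, ha⟩
      refine ⟨hal, fun i e he => ha i e ?_⟩
      simp [hz, he]
    have hz2 : AxSet l A z ⊆ AxSet l A x₂ := by
      rintro a ⟨hal, ha⟩
      refine ⟨hal, fun i e he => ?_⟩
      cases h : x₁ i with
      | none => exact ha i e (by simp [hz, h, he])
      | some b =>
        have hbe : b = e := hcompat i b e h he
        subst hbe
        exact ha i b (by simp [hz, h])
    -- A_z is null: contradiction with hpos
    refine hpos z hzfin ?_
    have hG : (Set.Iio l.ord \ (AxSet l A x₁ \ B₁)) ∩
        ((Set.Iio l.ord \ (AxSet l A x₂ \ B₂)) ∩ (Set.Iio l.ord \ (B₁ ∩ B₂))) ∈ D₀ :=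
      hDint _ _ (hxnull B₁ h₁) (hDint _ _ (hxnull B₂ h₂) (hSnull B₁ h₁ B₂ h₂ hne12))
    refine hDup _ _ hG ?_ Set.diff_subset
    rintro a ⟨⟨haI, ha1⟩, ⟨-, ha2⟩, ⟨-, ha12⟩⟩
    refine ⟨haI, fun haz => ?_⟩
    have hb1 : a ∈ B₁ := by
      by_contra hb
      exact ha1 ⟨hz1 haz, hb⟩
    have hb2 : a ∈ B₂ := by
      by_contra hb
      exact ha2 ⟨hz2 haz, hb⟩
    exact ha12 ⟨hb1, hb2⟩
  -- build the injection into Iio l.ord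
  have hplt : ∀ B (hB : B ∈ S), p B hB ∈ Set.Iio l.ord := fun B hB => (hp B hB).1
  let f : ↥S → ↥(Set.Iio l.ord) := fun B => ⟨p B.1 B.2, hplt B.1 B.2⟩
  have hfinj : Function.Injective f := by
    rintro ⟨B₁, h₁⟩ ⟨B₂, h₂⟩ hfe
    ext1
    by_contra hne12
    have hic := hincomp B₁ h₁ B₂ h₂ hne12
    simp only [Compatible] at hic
    push_neg at hic
    obtain ⟨i, a, b, hia, hib, hab⟩ := hic
    have hpa : p B₁ h₁ ∈ A i a := (hp B₁ h₁).2 i a hia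
    have hpb : p B₂ h₂ ∈ A i b := (hp B₂ h₂).2 i b hib
    have hpe : p B₁ h₁ = p B₂ h₂ := congrArg Subtype.val hfe
    rw [hpe] at hpa
    have : p B₂ h₂ ∈ A i a ∩ A i b := ⟨hpa, hpb⟩
    rw [hdisj i a b hab] at this
    exact this
  calc Cardinal.mk ↥S ≤ Cardinal.mk ↥(Set.Iio l.ord) := Cardinal.mk_le_of_injective hfinj
    _ = Cardinal.lift.{1} l := by
        rw [Ordinal.mk_Iio_ordinal, Cardinal.card_ord]
end

section
/- For every regular uncountable cardinal λ there exists a family ⟨A_{ξ,ε} : ξ < 2^λ, ε < λ⟩ of subsets of λ such that: (i) for each ξ, the sets A_{ξ,ε₁} and A_{ξ,ε₂} are disjoint whenever ε₁ ≠ ε₂; and (ii) for every n ≥ 1, all pairwise distinct ξ₁, …, ξₙ < 2^λ and arbitrary ε₁, …, εₙ < λ, the intersection A_{ξ₁,ε₁} ∩ … ∩ A_{ξₙ,εₙ} is a stationary subset of λ. -/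
namespace StatIndep
open Cardinal Set Ordinal

/-- The set of ordinals below `l.ord` of cofinality `ω`. -/
def Sw (l : Cardinal.{0}) : Set Ordinal.{0} :=
  {α | α < l.ord ∧ Order.IsSuccLimit α ∧ α.cof = Cardinal.aleph0}

lemma sup_nat_lt {l : Cardinal.{0}} (hreg : l.IsRegular) (hunc : Cardinal.aleph0 < l)
    {x : ℕ → Ordinal.{0}} (hx : ∀ n, x n < l.ord) : (⨆ n, x n) < l.ord := by
  apply Ordinal.iSup_lt_ord _ hx
  rw [hreg.cof_eq, Cardinal.mk_nat]
  exact hunc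

lemma exists_lt_of_lt_iSup {x : ℕ → Ordinal.{0}} {β : Ordinal.{0}} (h : β < ⨆ n, x n) :
    ∃ n, β < x n := by
  by_contra hcon
  push_neg at hcon
  exact absurd (ciSup_le hcon) (not_le.2 h)

lemma sup_isLimit {x : ℕ → Ordinal.{0}} (hmono : ∀ n, x n < x (n + 1)) :
    Order.IsSuccLimit (⨆ n, x n) := by
  have hxle : ∀ n, x n ≤ ⨆ n, x n := fun n => le_ciSup (Ordinal.bddAbove_range x) n
  refine Ordinal.isSuccLimit_iff.2 ⟨?_, Order.isSuccPrelimit_iff_succ_lt.2 ?_⟩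
  · intro h0
    have : x 0 < ⨆ n, x n := lt_of_lt_of_le (hmono 0) (hxle 1)
    rw [h0] at this
    exact absurd this (zero_le (a := x 0)).not_gt
  · intro β hβ
    obtain ⟨n, hn⟩ := exists_lt_of_lt_iSup hβ
    exact lt_of_le_of_lt (Order.succ_le_of_lt hn) (lt_of_lt_of_le (hmono n) (hxle (n + 1)))

lemma reach {l : Cardinal.{0}} (hreg : l.IsRegular) (hunc : Cardinal.aleph0 < l)
    {C : Set Ordinal.{0}} (hC : IsClubIn l C) {x : ℕ → Ordinal.{0}}
    (hmono : ∀ n, x n < x (n + 1)) (hlt : ∀ n, x n < l.ord) (n₀ : ℕ)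
    (hy : ∀ m, n₀ ≤ m → ∃ y ∈ C, x m ≤ y ∧ y ≤ x (m + 1)) : (⨆ n, x n) ∈ C := by
  have hsm : StrictMono x := strictMono_nat_of_lt_succ hmono
  have hxle : ∀ n, x n ≤ ⨆ n, x n := fun n => le_ciSup (Ordinal.bddAbove_range x) n
  have hαlt : (⨆ n, x n) < l.ord := sup_nat_lt hreg hunc hlt
  choose y hyC hy1 hy2 using fun m => hy (m + n₀) (Nat.le_add_left _ _)
  have hr : Set.range y ⊆ C := by rintro _ ⟨m, rfl⟩; exact hyC m
  have hne : (Set.range y).Nonempty := ⟨y 0, ⟨0, rfl⟩⟩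
  have hsup : sSup (Set.range y) = ⨆ n, x n := by
    apply le_antisymm
    · apply csSup_le hne
      rintro _ ⟨m, rfl⟩
      exact (hy2 m).trans (hxle _)
    · apply ciSup_le
      intro k
      calc x k ≤ x (k + n₀) := hsm.monotone (Nat.le_add_right _ _)
        _ ≤ y k := hy1 k
        _ ≤ sSup (Set.range y) := le_csSup (Ordinal.bddAbove_range y) ⟨k, rfl⟩
  have := hC.2.2 _ hr hne (hsup ▸ hαlt)
  rwa [hsup] at this

lemma seq_exists {l : Cardinal.{0}} {step : Ordinal.{0} → Ordinal.{0}}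
    (hstep : ∀ γ < l.ord, γ < step γ ∧ step γ < l.ord) {a : Ordinal.{0}} (ha : a < l.ord) :
    ∃ x : ℕ → Ordinal.{0}, x 0 = a ∧ (∀ n, x (n + 1) = step (x n)) ∧
      (∀ n, x n < x (n + 1)) ∧ (∀ n, x n < l.ord) := by
  refine ⟨fun k => Nat.rec a (fun _ ih => step ih) k, rfl, fun n => rfl, ?_, ?_⟩ <;>
    [skip; skip]
  all_goals
    have hlt : ∀ n, (fun k => Nat.rec a (fun _ ih => step ih) k : ℕ → Ordinal) n < l.ord := by
      intro n
      induction n with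
      | zero => exact ha
      | succ m ih => exact (hstep _ ih).2
  · exact fun n => (hstep _ (hlt n)).1
  · exact hlt

lemma club_Iio {l : Cardinal.{0}} : IsClubIn l (Set.Iio l.ord) :=
  ⟨subset_rfl, fun a ha => ⟨a, ha, le_rfl⟩, fun _ _ _ hlt => hlt⟩

lemma club_Ioo {l : Cardinal.{0}} (hreg : l.IsRegular) {η : Ordinal.{0}} (hη : η < l.ord) :
    IsClubIn l (Set.Ioo η l.ord) := by
  have hlim : Order.IsSuccLimit l.ord := Cardinal.isSuccLimit_ord hreg.aleph0_le
  refine ⟨fun x hx => hx.2, fun a ha => ?_, fun S hS hne hlt => ⟨?_, hlt⟩⟩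
  · refine ⟨max a (η + 1), ⟨?_, ?_⟩, le_max_left _ _⟩
    · exact lt_of_lt_of_le (Order.lt_succ η) (by rw [← Ordinal.add_one_eq_succ]; exact le_max_right _ _)
    · apply max_lt ha
      rw [Ordinal.add_one_eq_succ]
      exact hlim.succ_lt hη
  · obtain ⟨s, hs⟩ := hne
    exact lt_of_lt_of_le (hS hs).1 (le_csSup ⟨l.ord, fun t ht => (hS ht).2.le⟩ hs)

lemma club_iInter {l : Cardinal.{0}} (hreg : l.IsRegular) (hunc : Cardinal.aleph0 < l)
    {C : ℕ → Set Ordinal.{0}} (h : ∀ n, IsClubIn l (C n)) : IsClubIn l (⋂ n, C n) := by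
  have hlim : Order.IsSuccLimit l.ord := Cardinal.isSuccLimit_ord hreg.aleph0_le
  refine ⟨fun x hx => (h 0).1 (Set.mem_iInter.1 hx 0), ?_, ?_⟩
  · intro a ha
    classical
    have he : ∀ n (γ : Ordinal.{0}), ∃ y, γ < l.ord → y ∈ C n ∧ γ + 1 ≤ y := by
      intro n γ
      by_cases hγ : γ < l.ord
      · have hγ1 : γ + 1 < l.ord := by rw [Ordinal.add_one_eq_succ]; exact hlim.succ_lt hγ
        obtain ⟨y, hy1, hy2⟩ := (h n).2.1 (γ + 1) hγ1
        exact ⟨y, fun _ => ⟨hy1, hy2⟩⟩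
      · exact ⟨0, fun hc => absurd hc hγ⟩
    choose e he using he
    have hstep : ∀ γ < l.ord, γ < (⨆ n, e n γ) ∧ (⨆ n, e n γ) < l.ord := by
      intro γ hγ
      constructor
      · calc γ < γ + 1 := lt_add_one γ
          _ ≤ e 0 γ := (he 0 γ hγ).2
          _ ≤ ⨆ n, e n γ := le_ciSup (Ordinal.bddAbove_range _) 0
      · exact sup_nat_lt hreg hunc (fun n => (h n).1 (he n γ hγ).1)
    obtain ⟨x, hx0, hxs, hxmono, hxlt⟩ := seq_exists hstep ha
    refine ⟨⨆ n, x n, Set.mem_iInter.2 fun n => ?_, hx0 ▸ le_ciSup (Ordinal.bddAbove_range x) 0⟩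
    apply reach hreg hunc (h n) hxmono hxlt 0
    intro m _
    refine ⟨e n (x m), (he n (x m) (hxlt m)).1, ?_, ?_⟩
    · exact (le_of_lt (lt_add_one (x m))).trans (he n (x m) (hxlt m)).2
    · rw [hxs m]
      exact le_ciSup (Ordinal.bddAbove_range _) n
  · intro S hS hne hlt
    exact Set.mem_iInter.2 fun n => (h n).2.2 S (hS.trans (Set.iInter_subset _ n)) hne hlt

lemma club_inter {l : Cardinal.{0}} (hreg : l.IsRegular) (hunc : Cardinal.aleph0 < l)
    {A B : Set Ordinal.{0}} (hA : IsClubIn l A) (hB : IsClubIn l B) : IsClubIn l (A ∩ B) := by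
  have h := club_iInter hreg hunc (C := fun n => Nat.casesOn n A fun _ => B)
    (fun n => by cases n with | zero => exact hA | succ m => exact hB)
  have he : (⋂ n, (Nat.casesOn n A fun _ => B : Set Ordinal)) = A ∩ B := by
    ext γ
    simp only [Set.mem_iInter, Set.mem_inter_iff]
    constructor
    · intro hg; exact ⟨hg 0, hg 1⟩
    · rintro ⟨h1, h2⟩ n
      cases n with | zero => exact h1 | succ m => exact h2
  rwa [he] at h



lemma club_diag {l : Cardinal.{0}} (hreg : l.IsRegular) (hunc : Cardinal.aleph0 < l)
    {C : Ordinal.{0} → Set Ordinal.{0}} (h : ∀ β, IsClubIn l (C β)) :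
    IsClubIn l {γ | γ < l.ord ∧ ∀ β < γ, γ ∈ C β} := by
  have hlim : Order.IsSuccLimit l.ord := Cardinal.isSuccLimit_ord hreg.aleph0_le
  classical
  refine ⟨fun γ hγ => hγ.1, ?_, ?_⟩
  · intro a ha
    have he : ∀ (β γ : Ordinal.{0}), ∃ y, γ < l.ord → y ∈ C β ∧ γ + 1 ≤ y := by
      intro β γ
      by_cases hγ : γ < l.ord
      · have hγ1 : γ + 1 < l.ord := by rw [Ordinal.add_one_eq_succ]; exact hlim.succ_lt hγ
        obtain ⟨y, hy1, hy2⟩ := (h β).2.1 (γ + 1) hγ1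
        exact ⟨y, fun _ => ⟨hy1, hy2⟩⟩
      · exact ⟨0, fun hc => absurd hc hγ⟩
    choose e he using he
    set step : Ordinal.{0} → Ordinal.{0} :=
      fun γ => max (γ + 1) (Ordinal.bsup γ (fun β _ => e β γ)) with hstepdef
    have hstep : ∀ γ < l.ord, γ < step γ ∧ step γ < l.ord := by
      intro γ hγ
      refine ⟨lt_of_lt_of_le (lt_add_one γ) (le_max_left _ _), max_lt ?_ ?_⟩
      · rw [Ordinal.add_one_eq_succ]; exact hlim.succ_lt hγ
      · apply Ordinal.bsup_lt_ord
        · rw [hreg.cof_eq]; exact Cardinal.lt_ord.1 hγ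
        · exact fun β _ => (h β).1 (he β γ hγ).1
    obtain ⟨x, hx0, hxs, hxmono, hxlt⟩ := seq_exists hstep ha
    have hxle : ∀ n, x n ≤ ⨆ n, x n := fun n => le_ciSup (Ordinal.bddAbove_range x) n
    refine ⟨⨆ n, x n, ⟨sup_nat_lt hreg hunc hxlt, ?_⟩, hx0 ▸ hxle 0⟩
    intro β hβ
    obtain ⟨n₀, hn₀⟩ := exists_lt_of_lt_iSup hβ
    apply reach hreg hunc (h β) hxmono hxlt n₀
    intro m hm
    have hβm : β < x m := lt_of_lt_of_le hn₀ ((strictMono_nat_of_lt_succ hxmono).monotone hm)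
    refine ⟨e β (x m), (he β (x m) (hxlt m)).1, ?_, ?_⟩
    · exact (le_of_lt (lt_add_one (x m))).trans (he β (x m) (hxlt m)).2
    · rw [hxs m]
      exact le_trans (Ordinal.le_bsup (fun β _ => e β (x m)) β hβm) (le_max_right _ _)
  · intro S hS hne hlt
    refine ⟨hlt, ?_⟩
    intro β hβ
    obtain ⟨s₀, hs₀S, hs₀β⟩ := exists_lt_of_lt_csSup hne hβ
    set T : Set Ordinal.{0} := {s ∈ S | β < s} with hT
    have hTsub : T ⊆ C β := fun s hs => (hS hs.1).2 β hs.2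
    have hTne : T.Nonempty := ⟨s₀, hs₀S, hs₀β⟩
    have hbdd : BddAbove S := ⟨l.ord, fun t ht => ((hS ht).1).le⟩
    have hbddT : BddAbove T := ⟨l.ord, fun t ht => ((hS ht.1).1).le⟩
    have hsupT : sSup T = sSup S := by
      apply le_antisymm
      · exact csSup_le hTne fun t ht => le_csSup hbdd ht.1
      · apply csSup_le hne
        intro s hs
        rcases lt_or_ge β s with hc | hc
        · exact le_csSup hbddT ⟨hs, hc⟩
        · exact le_trans (hc.trans hs₀β.le) (le_csSup hbddT ⟨hs₀S, hs₀β⟩)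
    have := (h β).2.2 T hTsub hTne (hsupT ▸ hlt)
    rwa [hsupT] at this

lemma stationary_mono {l : Cardinal.{0}} {S S' : Set Ordinal.{0}} (h1 : S ⊆ S')
    (h2 : S' ⊆ Set.Iio l.ord) (h : IsStationaryIn l S) : IsStationaryIn l S' :=
  ⟨h2, fun C hC => (h.2 C hC).imp fun x hx => ⟨h1 hx.1, hx.2⟩⟩

lemma stationary_Sw {l : Cardinal.{0}} (hreg : l.IsRegular) (hunc : Cardinal.aleph0 < l) :
    IsStationaryIn l (Sw l) := by
  have hlim : Order.IsSuccLimit l.ord := Cardinal.isSuccLimit_ord hreg.aleph0_le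
  refine ⟨fun α hα => hα.1, ?_⟩
  intro C hC
  classical
  have he : ∀ γ : Ordinal.{0}, ∃ y, γ < l.ord → y ∈ C ∧ γ + 1 ≤ y := by
    intro γ
    by_cases hγ : γ < l.ord
    · have hγ1 : γ + 1 < l.ord := by rw [Ordinal.add_one_eq_succ]; exact hlim.succ_lt hγ
      obtain ⟨y, hy1, hy2⟩ := hC.2.1 (γ + 1) hγ1
      exact ⟨y, fun _ => ⟨hy1, hy2⟩⟩
    · exact ⟨0, fun hc => absurd hc hγ⟩
  choose e he using he
  have hstep : ∀ γ < l.ord, γ < e γ ∧ e γ < l.ord := by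
    intro γ hγ
    exact ⟨lt_of_lt_of_le (lt_add_one γ) (he γ hγ).2, hC.1 (he γ hγ).1⟩
  obtain ⟨x, hx0, hxs, hxmono, hxlt⟩ := seq_exists hstep hlim.pos
  have hmemC : ∀ n, x (n + 1) ∈ C := by
    intro n
    rw [hxs n]
    exact (he (x n) (hxlt n)).1
  have hαC : (⨆ n, x n) ∈ C := by
    apply reach hreg hunc hC hxmono hxlt 0
    intro m _
    exact ⟨x (m + 1), hmemC m, (hxmono m).le, le_rfl⟩
  have hαlim : Order.IsSuccLimit (⨆ n, x n) := sup_isLimit hxmono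
  have hαcof : (⨆ n, x n).cof = Cardinal.aleph0 := by
    apply le_antisymm
    · have := Ordinal.cof_iSup_le (f := x) ?_
      · rwa [Cardinal.mk_nat] at this
      · intro n
        exact lt_of_lt_of_le (hxmono n) (le_ciSup (Ordinal.bddAbove_range x) (n + 1))
    · exact Ordinal.aleph0_le_cof.2 hαlim
  exact ⟨⨆ n, x n, ⟨sup_nat_lt hreg hunc hxlt, hαlim, hαcof⟩, hαC⟩

lemma not_stationary {l : Cardinal.{0}} {S : Set Ordinal.{0}} (hsub : S ⊆ Set.Iio l.ord)
    (h : ¬ IsStationaryIn l S) : ∃ C, IsClubIn l C ∧ S ∩ C = ∅ := by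
  rw [IsStationaryIn, not_and] at h
  have := h hsub
  push_neg at this
  obtain ⟨C, hC1, hC2⟩ := this
  exact ⟨C, hC1, hC2⟩

lemma fodor {l : Cardinal.{0}} (hreg : l.IsRegular) (hunc : Cardinal.aleph0 < l)
    {S : Set Ordinal.{0}} (hS : IsStationaryIn l S) (f : Ordinal.{0} → Ordinal.{0})
    (hf : ∀ α ∈ S, f α < α) :
    ∃ β, IsStationaryIn l {α | α ∈ S ∧ f α = β} := by
  by_contra hcon
  push_neg at hcon
  have hh : ∀ β, ∃ C, IsClubIn l C ∧ {α | α ∈ S ∧ f α = β} ∩ C = ∅ := by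
    intro β
    exact not_stationary (fun α hα => hS.1 hα.1) (hcon β)
  choose C hC hdisj using hh
  obtain ⟨α, hαS, hαΔ⟩ := hS.2 _ (club_diag hreg hunc hC)
  have hmem : α ∈ C (f α) := hαΔ.2 (f α) (hf α hαS)
  have : α ∈ {a | a ∈ S ∧ f a = f α} ∩ C (f α) := ⟨⟨hαS, rfl⟩, hmem⟩
  rw [hdisj (f α)] at this
  exact this

lemma exists_seq {l : Cardinal.{0}} {α : Ordinal.{0}} (hα : α ∈ Sw l) :
    ∃ F : ℕ → Ordinal.{0}, (∀ n, F n < α) ∧ ∀ η < α, ∃ n, η ≤ F n := by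
  obtain ⟨f, hf⟩ := Ordinal.exists_fundamental_sequence α
  have hω : α.cof.ord = Ordinal.omega0 := by rw [hα.2.2, Cardinal.ord_aleph0]
  have hnat : ∀ n : ℕ, (n : Ordinal) < α.cof.ord := by
    intro n; rw [hω]; exact Ordinal.nat_lt_omega0 n
  refine ⟨fun n => f n (hnat n), fun n => hf.lt _, ?_⟩
  intro η hη
  have hblt : η < Ordinal.blsub _ f := by rw [hf.blsub_eq]; exact hη
  obtain ⟨b, hb, hle⟩ := Ordinal.lt_blsub_iff.1 hblt
  obtain ⟨m, rfl⟩ := Ordinal.lt_omega0.1 (hω ▸ hb)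
  exact ⟨m, hle⟩

lemma solovay {l : Cardinal.{0}} (hreg : l.IsRegular) (hunc : Cardinal.aleph0 < l) :
    ∃ g : Ordinal.{0} → Ordinal.{0},
      (∀ β, IsStationaryIn l {α | α ∈ Sw l ∧ g α = β} → β < l.ord) ∧
      (∀ a < l.ord, ∃ b, IsStationaryIn l {α | α ∈ Sw l ∧ g α = b} ∧ a ≤ b) := by
  classical
  have hF : ∀ α : Ordinal.{0}, ∃ F : ℕ → Ordinal.{0},
      α ∈ Sw l → (∀ n, F n < α) ∧ ∀ η < α, ∃ n, η ≤ F n := by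
    intro α
    by_cases hα : α ∈ Sw l
    · obtain ⟨F, h1, h2⟩ := exists_seq hα
      exact ⟨F, fun _ => ⟨h1, h2⟩⟩
    · exact ⟨fun _ => 0, fun hc => absurd hc hα⟩
  choose F hF1 hF2 using hF
  -- Step 1: there is an n₀ such that all "tails" are stationary
  have key : ∃ n₀ : ℕ, ∀ η < l.ord, IsStationaryIn l {α | α ∈ Sw l ∧ η ≤ F α n₀} := by
    by_contra hcon
    push_neg at hcon
    have hcon' : ∀ n : ℕ, ∃ η, η < l.ord ∧
        ∃ C, IsClubIn l C ∧ {α | α ∈ Sw l ∧ η ≤ F α n} ∩ C = ∅ := by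
      intro n
      obtain ⟨η, hη1, hη2⟩ := hcon n
      obtain ⟨C, hC1, hC2⟩ := not_stationary (fun α hα => hα.1.1) hη2
      exact ⟨η, hη1, C, hC1, hC2⟩
    choose η hη C hC hdisj using hcon'
    set ηs := ⨆ n, η n with hηs
    have hηslt : ηs < l.ord := sup_nat_lt hreg hunc hη
    have hclub : IsClubIn l ((⋂ n, C n) ∩ Set.Ioo ηs l.ord) :=
      club_inter hreg hunc (club_iInter hreg hunc hC) (club_Ioo hreg hηslt)
    obtain ⟨α, hαS, hαC⟩ := (stationary_Sw hreg hunc).2 _ hclub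
    have hαη : ηs < α := hαC.2.1
    obtain ⟨n, hn⟩ := hF2 α hαS ηs hαη
    have hcontra : α ∈ {α | α ∈ Sw l ∧ η n ≤ F α n} ∩ C n :=
      ⟨⟨hαS, le_trans (le_ciSup (Ordinal.bddAbove_range η) n) hn⟩,
        Set.mem_iInter.1 hαC.1 n⟩
    rw [hdisj n] at hcontra
    exact hcontra
  obtain ⟨n₀, hkey⟩ := key
  refine ⟨fun α => F α n₀, ?_, ?_⟩
  · intro β hβ
    obtain ⟨α, hα, -⟩ := hβ.2 _ (club_Iio (l := l))
    have : F α n₀ < α := hF1 α hα.1 n₀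
    exact hα.2 ▸ lt_trans this (hα.1.1)
  · intro a ha
    have hstat := hkey a ha
    obtain ⟨β, hβ⟩ := fodor hreg hunc hstat (fun α => F α n₀)
      (fun α hα => hF1 α hα.1 n₀)
    have hstat' : IsStationaryIn l {α | α ∈ Sw l ∧ F α n₀ = β} :=
      stationary_mono (fun α hα => ⟨hα.1.1, hα.2⟩) (fun α hα => hα.1.1) hβ
    obtain ⟨α, hα, -⟩ := hβ.2 _ (club_Iio (l := l))
    exact ⟨β, hstat', hα.2 ▸ hα.1.2⟩

lemma unbounded_card {l : Cardinal.{0}} (hreg : l.IsRegular) {B : Set Ordinal.{0}}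
    (hBsub : ∀ b ∈ B, b < l.ord) (hBunb : ∀ a < l.ord, ∃ b ∈ B, a ≤ b) :
    l ≤ #{t : l.ord.ToType // ((Ordinal.ToType.mk (o := l.ord)).symm t : Ordinal) ∈ B} := by
  have h1 : l.ord.cof ≤
      #{t : l.ord.ToType // ((Ordinal.ToType.mk (o := l.ord)).symm t : Ordinal) ∈ B} := by
    rw [← Ordinal.cof_toType]
    apply Order.cof_le
    intro a
    obtain ⟨b, hbB, hab⟩ := hBunb ((Ordinal.ToType.mk (o := l.ord)).symm a)
      ((Ordinal.ToType.mk (o := l.ord)).symm a).2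
    refine ⟨Ordinal.ToType.mk (o := l.ord) ⟨b, hBsub b hbB⟩, ?_, ?_⟩
    · show ((Ordinal.ToType.mk (o := l.ord)).symm
        (Ordinal.ToType.mk (o := l.ord) ⟨b, hBsub b hbB⟩) : Ordinal) ∈ B
      rw [OrderIso.symm_apply_apply]
      exact hbB
    · conv_lhs => rw [← (Ordinal.ToType.mk (o := l.ord)).apply_symm_apply a]
      exact (Ordinal.ToType.mk (o := l.ord)).le_iff_le.2 (Subtype.coe_le_coe.1 hab)
  rwa [hreg.cof_eq] at h1

/-- Finite "trace" of a set on a finite set. -/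
noncomputable def sel (l : Cardinal.{0}) (X : Set l.ord.ToType) (E : Finset l.ord.ToType) :
    Finset l.ord.ToType :=
  @Finset.filter _ (fun a => a ∈ X) (Classical.decPred _) E

lemma mem_sel {l : Cardinal.{0}} {X : Set l.ord.ToType} {E : Finset l.ord.ToType}
    {a : l.ord.ToType} : a ∈ sel l X E ↔ a ∈ E ∧ a ∈ X := by
  unfold sel
  exact @Finset.mem_filter _ _ (Classical.decPred _) _ _

/-- The index type for the independent family: finite "conditions". -/
abbrev Dom (l : Cardinal.{0}) : Type :=
  Finset l.ord.ToType × Finset (Finset l.ord.ToType × l.ord.ToType)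

/-- Evaluation of the independent family of functions. -/
noncomputable def fIdx (l : Cardinal.{0}) (junk : l.ord.ToType) (X : Set l.ord.ToType)
    (d : Dom l) : l.ord.ToType :=
  if h : ∃ p ∈ d.2, p.1 = sel l X d.1 then h.choose.2 else junk

lemma fIdx_spec (l : Cardinal.{0}) (junk : l.ord.ToType) {n : ℕ}
    (X : Fin n → Set l.ord.ToType) (hX : ∀ i j, i ≠ j → X i ≠ X j)
    (t : Fin n → l.ord.ToType) : ∃ d : Dom l, ∀ i, fIdx l junk (X i) d = t i := by
  classical
  have hP : ∀ i j : Fin n, i ≠ j →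
      ∃ x, (x ∈ X i ∧ x ∉ X j) ∨ (x ∉ X i ∧ x ∈ X j) := by
    intro i j hij
    by_contra hcon
    push_neg at hcon
    apply hX i j hij
    ext x
    have := hcon x
    tauto
  set s : Fin n → Fin n → l.ord.ToType := fun i j =>
    if h : ∃ x, (x ∈ X i ∧ x ∉ X j) ∨ (x ∉ X i ∧ x ∈ X j) then h.choose else junk with hs
  set E : Finset l.ord.ToType :=
    Finset.image (fun p : Fin n × Fin n => s p.1 p.2) Finset.univ with hE
  have key : ∀ i j : Fin n, i ≠ j → sel l (X i) E ≠ sel l (X j) E := by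
    intro i j hij heq
    have hex := hP i j hij
    have hsx : s i j = hex.choose := by rw [hs]; exact dif_pos hex
    have hxE : s i j ∈ E := Finset.mem_image.2 ⟨(i, j), Finset.mem_univ _, rfl⟩
    rcases hex.choose_spec with ⟨h1, h2⟩ | ⟨h1, h2⟩
    · have hmem : s i j ∈ sel l (X i) E := mem_sel.2 ⟨hxE, by rw [hsx]; exact h1⟩
      rw [heq] at hmem
      exact h2 (by have := (mem_sel.1 hmem).2; rwa [hsx] at this)
    · have hmem : s i j ∈ sel l (X j) E := mem_sel.2 ⟨hxE, by rw [hsx]; exact h2⟩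
      rw [← heq] at hmem
      exact h1 (by have := (mem_sel.1 hmem).2; rwa [hsx] at this)
  set H : Finset (Finset l.ord.ToType × l.ord.ToType) :=
    Finset.image (fun i => (sel l (X i) E, t i)) Finset.univ with hH
  refine ⟨(E, H), ?_⟩
  intro i
  have hex : ∃ p ∈ (E, H).2, p.1 = sel l (X i) (E, H).1 :=
    ⟨(sel l (X i) E, t i), Finset.mem_image.2 ⟨i, Finset.mem_univ _, rfl⟩, rfl⟩
  rw [fIdx, dif_pos hex]
  obtain ⟨hmem, hfst⟩ := hex.choose_spec
  obtain ⟨j, -, hj⟩ := Finset.mem_image.1 hmem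
  have hji : j = i := by
    by_contra hji
    exact key j i hji (by rw [show sel l (X j) E = _ from congrArg Prod.fst hj, hfst])
  rw [← hj, hji]

end StatIndep

section
open Cardinal

/-- For every regular uncountable cardinal `λ` there is a family
`⟨A_{ξ,ε} : ξ < 2^λ, ε < λ⟩` of subsets of `λ` such that for each `ξ` the sets `A_{ξ,ε}`
are pairwise disjoint in `ε`, and every finite intersection
`A_{ξ₁,ε₁} ∩ … ∩ A_{ξₙ,εₙ}` (with the `ξ`'s pairwise distinct) is stationary in `λ`. -/
theorem exists_independent_stationary_family (l : Cardinal.{0})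
    (hreg : l.IsRegular) (hunc : Cardinal.aleph0 < l) :
    ∃ A : Ordinal.{0} → Ordinal.{0} → Set Ordinal.{0},
      (∀ ξ ε, ξ < ((2 : Cardinal) ^ l).ord → ε < l.ord → A ξ ε ⊆ Set.Iio l.ord) ∧
      (∀ ξ ε₁ ε₂, ξ < ((2 : Cardinal) ^ l).ord → ε₁ < l.ord → ε₂ < l.ord → ε₁ ≠ ε₂ →
        A ξ ε₁ ∩ A ξ ε₂ = ∅) ∧
      ∀ n : ℕ, 1 ≤ n → ∀ ξ : Fin n → Ordinal.{0}, (∀ i, ξ i < ((2 : Cardinal) ^ l).ord) →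
        Function.Injective ξ → ∀ ε : Fin n → Ordinal.{0}, (∀ i, ε i < l.ord) →
          IsStationaryIn l (⋂ i, A (ξ i) (ε i)) := by
  classical
  obtain ⟨g, hB1, hB2⟩ := StatIndep.solovay hreg hunc
  have hT : #(l.ord.ToType) = l := by rw [Cardinal.mk_toType, Cardinal.card_ord]
  have hTinf : Infinite l.ord.ToType := by
    rw [Cardinal.infinite_iff, hT]; exact hreg.aleph0_le
  obtain ⟨junk⟩ : Nonempty l.ord.ToType := inferInstance
  have h1 : #(Finset l.ord.ToType) = l := by rw [Cardinal.mk_finset_of_infinite, hT]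
  have h2 : #(Finset l.ord.ToType × l.ord.ToType) = l := by
    rw [Cardinal.mk_prod, Cardinal.lift_id, Cardinal.lift_id, h1, hT,
      Cardinal.mul_eq_self hreg.aleph0_le]
  have h3 : Infinite (Finset l.ord.ToType × l.ord.ToType) := by
    rw [Cardinal.infinite_iff, h2]; exact hreg.aleph0_le
  have hDom : #(StatIndep.Dom l) = l := by
    rw [show #(StatIndep.Dom l) =
        #(Finset l.ord.ToType × Finset (Finset l.ord.ToType × l.ord.ToType)) from rfl,
      Cardinal.mk_prod, Cardinal.lift_id, Cardinal.lift_id, h1,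
      Cardinal.mk_finset_of_infinite, h2, Cardinal.mul_eq_self hreg.aleph0_le]
  have hcard := StatIndep.unbounded_card hreg
    (B := {β | IsStationaryIn l {α | α ∈ StatIndep.Sw l ∧ g α = β}})
    (fun b hb => hB1 b hb) hB2
  have hle : #(StatIndep.Dom l) ≤ #{t : l.ord.ToType //
      ((Ordinal.ToType.mk (o := l.ord)).symm t : Ordinal) ∈
        {β | IsStationaryIn l {α | α ∈ StatIndep.Sw l ∧ g α = β}}} :=
    le_trans (le_of_eq hDom) hcard
  obtain ⟨jemb⟩ := (Cardinal.le_def _ _).1 hle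
  have hjinj : Function.Injective
      (fun d => ((Ordinal.ToType.mk (o := l.ord)).symm (jemb d).1 : Ordinal)) := by
    intro d1 d2 h
    apply jemb.injective
    apply Subtype.ext
    apply (Ordinal.ToType.mk (o := l.ord)).symm.injective
    exact Subtype.ext h
  set j : StatIndep.Dom l → Ordinal.{0} :=
    fun d => ((Ordinal.ToType.mk (o := l.ord)).symm (jemb d).1 : Ordinal) with hjdef
  have hjB : ∀ d, IsStationaryIn l {α | α ∈ StatIndep.Sw l ∧ g α = j d} :=
    fun d => (jemb d).2
  have hT2 : #(((2 : Cardinal.{0}) ^ l).ord.ToType) = 2 ^ l := by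
    rw [Cardinal.mk_toType, Cardinal.card_ord]
  have hsetT : #(Set l.ord.ToType) = 2 ^ l := by rw [Cardinal.mk_set, hT]
  obtain ⟨e⟩ := (Cardinal.le_def _ _).1 (le_of_eq (hT2.trans hsetT.symm))
  set embX : Ordinal.{0} → Set l.ord.ToType := fun ξ =>
    if h : ξ < ((2 : Cardinal) ^ l).ord then
      e (Ordinal.ToType.mk (o := _) ⟨ξ, h⟩) else ∅ with hembX
  have hembinj : ∀ ξ₁ ξ₂, ξ₁ < ((2 : Cardinal) ^ l).ord → ξ₂ < ((2 : Cardinal) ^ l).ord →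
      embX ξ₁ = embX ξ₂ → ξ₁ = ξ₂ := by
    intro ξ₁ ξ₂ hξ1 hξ2 h
    rw [hembX] at h
    simp only [dif_pos hξ1, dif_pos hξ2] at h
    have h' := (Ordinal.ToType.mk (o := _)).injective (e.injective h)
    exact congrArg Subtype.val h'
  set v : l.ord.ToType → Ordinal.{0} :=
    fun t => ((Ordinal.ToType.mk (o := l.ord)).symm t : Ordinal) with hv
  refine ⟨fun ξ ε => {α | ∃ d : StatIndep.Dom l,
      v (StatIndep.fIdx l junk (embX ξ) d) = ε ∧ α ∈ StatIndep.Sw l ∧ g α = j d},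
      ?_, ?_, ?_⟩
  · rintro ξ ε hξ hε α ⟨d, -, hd, -⟩
    exact hd.1
  · intro ξ ε₁ ε₂ hξ hε1 hε2 hne
    apply Set.eq_empty_iff_forall_notMem.2
    rintro α ⟨⟨d1, hv1, -, hg1⟩, ⟨d2, hv2, -, hg2⟩⟩
    apply hne
    have hd12 : d1 = d2 := hjinj (by rw [← hg1, ← hg2])
    rw [← hv1, ← hv2, hd12]
  · intro n hn ξ hξb hξinj ε hεb
    have hXne : ∀ i j', i ≠ j' → embX (ξ i) ≠ embX (ξ j') := by
      intro i j' hij heq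
      exact hij (hξinj (hembinj _ _ (hξb i) (hξb j') heq))
    obtain ⟨d, hd⟩ := StatIndep.fIdx_spec l junk (fun i => embX (ξ i)) hXne
      (fun i => Ordinal.ToType.mk (o := l.ord) ⟨ε i, hεb i⟩)
    have hsub : {α | α ∈ StatIndep.Sw l ∧ g α = j d} ⊆
        ⋂ i, {α | ∃ d' : StatIndep.Dom l,
          v (StatIndep.fIdx l junk (embX (ξ i)) d') = ε i ∧
            α ∈ StatIndep.Sw l ∧ g α = j d'} := by
      intro α hα
      apply Set.mem_iInter.2
      intro i
      refine ⟨d, ?_, hα.1, hα.2⟩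
      rw [hd i, hv]
      simp
    apply StatIndep.stationary_mono hsub ?_ (hjB d)
    intro α hα
    have := Set.mem_iInter.1 hα ⟨0, hn⟩
    obtain ⟨d', -, hd', -⟩ := this
    exact hd'.1


end
end

section
/- Let λ be a singular cardinal and let ⟨λ_j : j < cf(λ)⟩ be a strictly increasing sequence of infinite cardinals cofinal in λ. Then there exists a family ⟨A_{ξ,ε} : ξ < 2^λ, ε < λ⟩ of subsets of λ such that: (i) for each ξ, the sets A_{ξ,ε₁} and A_{ξ,ε₂} are disjoint whenever ε₁ ≠ ε₂; and (ii) for every n ≥ 1, all pairwise distinct ξ₁, …, ξₙ < 2^λ and arbitrary ε₁, …, εₙ < λ, there exists j₀ < cf(λ) such that for every j with j₀ ≤ j < cf(λ), the set (A_{ξ₁,ε₁} ∩ … ∩ A_{ξₙ,εₙ}) ∩ λ_j⁺ is a stationary subset of the successor cardinal λ_j⁺. -/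
open Cardinal Set Order


lemma tail_isClubIn {μ : Cardinal.{0}} (hμ : ℵ₀ ≤ μ) {x : Ordinal} (hx : x < μ.ord) :
    IsClubIn μ {β | x < β ∧ β < μ.ord} := by
  have hlim : Order.IsSuccLimit μ.ord := Cardinal.isSuccLimit_ord hμ
  refine ⟨fun β hβ => hβ.2, ?_, ?_⟩
  · intro a ha
    exact ⟨max (Order.succ x) a, ⟨lt_of_lt_of_le (Order.lt_succ x) (le_max_left _ _),
      max_lt (hlim.succ_lt hx) ha⟩, le_max_right _ _⟩
  · intro S hS ⟨b, hb⟩ hsup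
    have hbdd : BddAbove S := ⟨μ.ord, fun c hc => (hS hc).2.le⟩
    exact ⟨lt_of_lt_of_le (hS hb).1 (le_csSup hbdd hb), hsup⟩

lemma isClubIn_iInter {μ : Cardinal.{0}} (hreg : μ.IsRegular) (hμ : ℵ₀ < μ)
    {ι : Type} [Nonempty ι] (hι : #ι < μ) {C : ι → Set Ordinal.{0}}
    (hC : ∀ i, IsClubIn μ (C i)) : IsClubIn μ (⋂ i, C i) := by
  obtain ⟨i₀⟩ := ‹Nonempty ι›
  have hμ0 : ℵ₀ ≤ μ := hreg.1
  have hlim : Order.IsSuccLimit μ.ord := Cardinal.isSuccLimit_ord hμ0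
  have hcof : μ.ord.cof = μ := hreg.cof_eq
  refine ⟨fun β hβ => (hC i₀).1 (Set.mem_iInter.1 hβ i₀), ?_, ?_⟩
  · intro a ha
    have hnext : ∀ x : Ordinal, ∀ i : ι, ∃ b, x < μ.ord → (b ∈ C i ∧ x < b ∧ b < μ.ord) := by
      intro x i
      by_cases hx : x < μ.ord
      · obtain ⟨b, hb, hxb⟩ := (hC i).2.1 (Order.succ x) (hlim.succ_lt hx)
        exact ⟨b, fun _ => ⟨hb, lt_of_lt_of_le (Order.lt_succ x) hxb, (hC i).1 hb⟩⟩
      · exact ⟨0, fun h => absurd h hx⟩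
    choose g hg using hnext
    set step : Ordinal → Ordinal := fun x => ⨆ i, g x i with hstep
    have hstep_lt : ∀ x, x < μ.ord → step x < μ.ord := by
      intro x hx
      exact Ordinal.iSup_lt_ord (by rw [hcof]; exact hι) fun i => (hg x i hx).2.2
    have hle_step : ∀ x i, g x i ≤ step x := fun x i => Ordinal.le_iSup _ i
    set b : ℕ → Ordinal := fun n => n.rec a (fun _ x => step x) with hbdef
    have hb_lt : ∀ n, b n < μ.ord := by
      intro n; induction n with
      | zero => exact ha
      | succ n ih => exact hstep_lt _ ih
    have hb_succ : ∀ n, b (n + 1) = step (b n) := fun n => rfl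
    have hb_lt_succ : ∀ n, b n < b (n + 1) := fun n =>
      lt_of_lt_of_le (hg (b n) i₀ (hb_lt n)).2.1 ((hle_step (b n) i₀).trans (hb_succ n).ge)
    set B : Ordinal := ⨆ n, b n with hBdef
    have hB_lt : B < μ.ord := by
      refine Ordinal.iSup_lt_ord ?_ hb_lt
      rw [hcof, Cardinal.mk_nat]; exact hμ
    have haB : a ≤ B := Ordinal.le_iSup b 0
    have hmem : ∀ i, B ∈ C i := by
      intro i
      have hsub : Set.range (fun n => g (b n) i) ⊆ C i := by
        rintro _ ⟨n, rfl⟩; exact (hg (b n) i (hb_lt n)).1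
      have hsup : sSup (Set.range (fun n => g (b n) i)) = B := by
        show (⨆ n, g (b n) i) = B
        apply le_antisymm
        · exact Ordinal.iSup_le fun n => ((hle_step (b n) i).trans (hb_succ n).ge).trans
            (Ordinal.le_iSup b (n + 1))
        · exact Ordinal.iSup_le fun n => (hg (b n) i (hb_lt n)).2.1.le.trans
            (Ordinal.le_iSup (fun n => g (b n) i) n)
      have := (hC i).2.2 _ hsub ⟨g (b 0) i, Set.mem_range_self 0⟩ (by rw [hsup]; exact hB_lt)
      rwa [hsup] at this
    exact ⟨B, Set.mem_iInter.2 hmem, haB⟩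
  · intro S hS hne hsup
    exact Set.mem_iInter.2 fun i => (hC i).2.2 S (fun x hx => Set.mem_iInter.1 (hS hx) i) hne hsup

lemma isClubIn_inter {μ : Cardinal.{0}} (hreg : μ.IsRegular) (hμ : ℵ₀ < μ)
    {C D : Set Ordinal.{0}} (hC : IsClubIn μ C) (hD : IsClubIn μ D) :
    IsClubIn μ (C ∩ D) := by
  rw [Set.inter_eq_iInter]
  refine isClubIn_iInter hreg hμ ?_ fun b => ?_
  · rw [Cardinal.mk_bool]
    exact lt_of_lt_of_le (by exact_mod_cast Cardinal.nat_lt_aleph0 2) hμ.le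
  · cases b <;> simpa

lemma IsClubIn.nonempty {μ : Cardinal.{0}} (hμ : ℵ₀ ≤ μ) {C : Set Ordinal.{0}}
    (hC : IsClubIn μ C) : C.Nonempty := by
  obtain ⟨b, hb, -⟩ := hC.2.1 0 (by
    rw [pos_iff_ne_zero, Ne, Cardinal.ord_eq_zero]
    exact ((Cardinal.aleph0_pos.trans_le hμ).ne').symm ∘ Eq.symm)
  exact ⟨b, hb⟩

lemma isStationaryIn_of_isClubIn {μ : Cardinal.{0}} (hreg : μ.IsRegular) (hμ : ℵ₀ < μ)
    {C : Set Ordinal.{0}} (hC : IsClubIn μ C) : IsStationaryIn μ C :=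
  ⟨hC.1, fun D hD => (isClubIn_inter hreg hμ hC hD).nonempty hreg.1⟩

lemma IsStationaryIn.mono {μ : Cardinal.{0}} {S T : Set Ordinal.{0}} (h : IsStationaryIn μ S)
    (hST : S ⊆ T) (hT : T ⊆ Set.Iio μ.ord) : IsStationaryIn μ T :=
  ⟨hT, fun C hC => ((h.2 C hC).mono (Set.inter_subset_inter_left _ hST))⟩

lemma exists_stationary_of_cover {μ : Cardinal.{0}} (hreg : μ.IsRegular) (hμ : ℵ₀ < μ)
    {ι : Type} [Nonempty ι] (hι : #ι < μ) {S : Set Ordinal.{0}} {T : ι → Set Ordinal.{0}}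
    (hS : IsStationaryIn μ S) (hcover : S ⊆ ⋃ i, T i) (hT : ∀ i, T i ⊆ Set.Iio μ.ord) :
    ∃ i, IsStationaryIn μ (T i) := by
  by_contra h
  push_neg at h
  have hC : ∀ i, ∃ C, IsClubIn μ C ∧ T i ∩ C = ∅ := by
    intro i
    have := h i
    rw [IsStationaryIn] at this
    push_neg at this
    obtain ⟨C, hC, hTC⟩ := this (hT i)
    exact ⟨C, hC, hTC⟩
  choose C hCclub hCT using hC
  obtain ⟨x, hxS, hxC⟩ := hS.2 _ (isClubIn_iInter hreg hμ hι hCclub)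
  obtain ⟨i, hi⟩ := Set.mem_iUnion.1 (hcover hxS)
  have : x ∈ T i ∩ C i := ⟨hi, Set.mem_iInter.1 hxC i⟩
  rw [hCT i] at this
  exact this

lemma ulam (κ : Cardinal.{0}) (hκ : ℵ₀ ≤ κ) :
    ∃ E : Ordinal.{0} → Set Ordinal.{0},
      (∀ τ, τ < κ.ord → E τ ⊆ Set.Ico κ.ord (Order.succ κ).ord) ∧
      (∀ τ₁ τ₂, τ₁ < κ.ord → τ₂ < κ.ord → τ₁ ≠ τ₂ → E τ₁ ∩ E τ₂ = ∅) ∧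
      (∀ τ, τ < κ.ord → IsStationaryIn (Order.succ κ) (E τ)) := by
  classical
  set μ : Cardinal := Order.succ κ with hμdef
  have hreg : μ.IsRegular := Cardinal.isRegular_succ hκ
  have hμinf : ℵ₀ ≤ μ := hreg.1
  have hμ : ℵ₀ < μ := hκ.trans_lt (Order.lt_succ κ)
  have hko : κ.ord < μ.ord := Cardinal.ord_lt_ord.2 (Order.lt_succ κ)
  have hkpos : (0 : Ordinal) < κ.ord := by
    rw [Cardinal.lt_ord, Ordinal.card_zero]
    exact Cardinal.aleph0_pos.trans_le hκ
  -- choose surjections from Iio κ.ord onto Iio β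
  have hg : ∀ β : Ordinal, ∃ g : Ordinal → Ordinal, κ.ord ≤ β → β < μ.ord →
      ∀ δ < β, ∃ α < κ.ord, g α = δ := by
    intro β
    by_cases hβ : κ.ord ≤ β ∧ β < μ.ord
    · obtain ⟨hβ1, hβ2⟩ := hβ
      have h1 : #(Set.Iio β) ≤ #(Set.Iio κ.ord) := by
        rw [Ordinal.mk_Iio_ordinal, Ordinal.mk_Iio_ordinal, Cardinal.lift_le,
          Cardinal.card_ord]
        exact Order.lt_succ_iff.1 (Cardinal.lt_ord.1 hβ2)
      obtain ⟨e⟩ := (Cardinal.le_def _ _).1 h1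
      haveI hne : Nonempty (Set.Iio β) := ⟨⟨0, lt_of_lt_of_le hkpos hβ1⟩⟩
      refine ⟨fun α => if h : α < κ.ord then ↑(Function.invFun e ⟨α, h⟩) else 0,
        fun _ _ δ hδ => ?_⟩
      refine ⟨↑(e ⟨δ, hδ⟩), (e ⟨δ, hδ⟩).2, ?_⟩
      dsimp only
      rw [dif_pos (show (↑(e ⟨δ, hδ⟩) : Ordinal) < κ.ord from (e ⟨δ, hδ⟩).2)]
      exact congrArg Subtype.val (Function.leftInverse_invFun e.injective ⟨δ, hδ⟩)
    · exact ⟨fun _ => 0, fun h1 h2 => absurd ⟨h1, h2⟩ hβ⟩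
  choose g hgspec using hg
  set Aset : Ordinal → Ordinal → Set Ordinal :=
    fun α δ => {β | κ.ord ≤ β ∧ β < μ.ord ∧ δ < β ∧ g β α = δ} with hAdef
  -- enumeration of Iio κ.ord by a small type
  set ιk : Type := κ.ord.ToType with hιkdef
  set eqv : Set.Iio κ.ord ≃o κ.ord.ToType := Ordinal.ToType.mk with heqvdef
  haveI : Nonempty ιk := ⟨eqv ⟨0, hkpos⟩⟩
  set bk : ιk → Ordinal := fun i => ↑(eqv.symm i) with hbkdef
  have hbk : ∀ i, bk i < κ.ord := fun i => (eqv.symm i).2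
  have hbksurj : ∀ α, α < κ.ord → ∃ i, bk i = α := by
    intro α hα
    exact ⟨eqv ⟨α, hα⟩, by simp [hbkdef]⟩
  have hmkιk : #ιk = κ := by rw [hιkdef, Cardinal.mk_toType, Cardinal.card_ord]
  have hιklt : #ιk < μ := by rw [hmkιk]; exact Order.lt_succ κ
  -- each column contains a stationary set
  have hcol : ∀ δ : Ordinal, ∃ α, δ < μ.ord → (α < κ.ord ∧ IsStationaryIn μ (Aset α δ)) := by
    intro δ
    by_cases hδ : δ < μ.ord
    · have htail : IsClubIn μ {β | max δ κ.ord < β ∧ β < μ.ord} :=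
        tail_isClubIn hμinf (max_lt hδ hko)
      have hcover : {β | max δ κ.ord < β ∧ β < μ.ord} ⊆ ⋃ i : ιk, Aset (bk i) δ := by
        intro β hβ
        obtain ⟨hβ1, hβ2⟩ := hβ
        have hδβ : δ < β := lt_of_le_of_lt (le_max_left _ _) hβ1
        have hκβ : κ.ord ≤ β := (lt_of_le_of_lt (le_max_right _ _) hβ1).le
        obtain ⟨α, hα, hgα⟩ := hgspec β hκβ hβ2 δ hδβ
        obtain ⟨i, hi⟩ := hbksurj α hα
        exact Set.mem_iUnion.2 ⟨i, hκβ, hβ2, hδβ, by rw [hi]; exact hgα⟩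
      obtain ⟨i, hi⟩ := exists_stationary_of_cover hreg hμ hιklt
        (isStationaryIn_of_isClubIn hreg hμ htail) hcover
        (fun i β hβ => hβ.2.1)
      exact ⟨bk i, fun _ => ⟨hbk i, hi⟩⟩
    · exact ⟨0, fun h => absurd h hδ⟩
  choose aF haF using hcol
  -- pigeonhole: some fiber is large
  set F : Ordinal → Set Ordinal := fun α => {δ | δ < μ.ord ∧ aF δ = α} with hFdef
  have hbig : ∃ i : ιk, ¬ (#(F (bk i)) ≤ Cardinal.lift.{1} κ) := by
    by_contra h
    push_neg at h
    have hFsub : Set.Iio μ.ord ⊆ ⋃ i : ιk, F (bk i) := by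
      intro δ hδ
      obtain ⟨i, hi⟩ := hbksurj (aF δ) (haF δ hδ).1
      exact Set.mem_iUnion.2 ⟨i, hδ, hi.symm ▸ rfl⟩
    have h1 : #(Set.Iio μ.ord) ≤ #(⋃ i : ιk, F (bk i)) := Cardinal.mk_le_mk_of_subset hFsub
    have h2 := Cardinal.mk_iUnion_le_lift (fun i : ιk => F (bk i))
    rw [Cardinal.lift_uzero] at h2
    have h3 : (⨆ i : ιk, Cardinal.lift.{0} #(F (bk i))) ≤ Cardinal.lift.{1} κ := by
      refine ciSup_le' fun i => ?_
      rw [Cardinal.lift_uzero]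
      exact h i
    have h4 : #(Set.Iio μ.ord) ≤ Cardinal.lift.{1} κ := by
      calc #(Set.Iio μ.ord) ≤ _ := h1
        _ ≤ _ := h2
        _ ≤ Cardinal.lift.{1} #ιk * Cardinal.lift.{1} κ := by
            exact mul_le_mul_right h3 _
        _ = Cardinal.lift.{1} κ * Cardinal.lift.{1} κ := by rw [hmkιk]
        _ = Cardinal.lift.{1} κ := Cardinal.mul_eq_self (Cardinal.aleph0_le_lift.2 hκ)
    rw [Ordinal.mk_Iio_ordinal, Cardinal.card_ord, Cardinal.lift_le, hμdef] at h4
    exact absurd h4 (Order.lt_succ κ).not_ge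
  obtain ⟨i₁, hbig⟩ := hbig
  set α₀ : Ordinal := bk i₁ with hα₀def
  have hemb : #(Set.Iio κ.ord) ≤ #(F α₀) := by
    rw [Ordinal.mk_Iio_ordinal, Cardinal.card_ord]
    exact (not_le.1 hbig).le
  obtain ⟨e⟩ := (Cardinal.le_def _ _).1 hemb
  refine ⟨fun τ => if h : τ < κ.ord then Aset α₀ ↑(e ⟨τ, h⟩) else ∅, ?_, ?_, ?_⟩
  · intro τ hτ
    dsimp only
    rw [dif_pos hτ]
    exact fun β hβ => Set.mem_Ico.2 ⟨hβ.1, hβ.2.1⟩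
  · intro τ₁ τ₂ hτ₁ hτ₂ hne
    dsimp only
    rw [dif_pos hτ₁, dif_pos hτ₂]
    ext β
    simp only [Set.mem_inter_iff, Set.mem_empty_iff_false, iff_false, not_and]
    intro h1 h2
    have hδne : (↑(e ⟨τ₁, hτ₁⟩) : Ordinal) ≠ ↑(e ⟨τ₂, hτ₂⟩) := by
      intro hval
      exact hne (Subtype.mk_eq_mk.1 (e.injective (Subtype.ext hval)))
    exact hδne (h1.2.2.2.symm.trans h2.2.2.2)
  · intro τ hτ
    dsimp only
    rw [dif_pos hτ]
    have hx := (e ⟨τ, hτ⟩).2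
    obtain ⟨hx1, hx2⟩ := hx
    have := haF ↑(e ⟨τ, hτ⟩) hx1
    rw [hx2] at this
    exact this.2

lemma ek (κ : Cardinal.{0}) (hκ : ℵ₀ ≤ κ) :
    ∃ G : Ordinal.{0} → Set Ordinal.{0} → Ordinal.{0},
      ∀ (n : ℕ) (X : Fin n → Set Ordinal.{0}) (ε : Fin n → Ordinal.{0}),
        (∀ i, ε i < κ.ord) →
        (∀ i i', i ≠ i' → ∃ β, β < κ.ord ∧
          ((β ∈ X i ∧ β ∉ X i') ∨ (β ∈ X i' ∧ β ∉ X i))) →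
        ∃ τ < κ.ord, ∀ i, G τ (X i) = ε i := by
  classical
  have hkpos : (0 : Ordinal) < κ.ord := by
    rw [Cardinal.lt_ord, Ordinal.card_zero]
    exact Cardinal.aleph0_pos.trans_le hκ
  haveI : Infinite ↥(Set.Iio κ.ord) := by
    rw [Cardinal.infinite_iff, Ordinal.mk_Iio_ordinal, Cardinal.card_ord]
    exact Cardinal.aleph0_le_lift.2 hκ
  set I : Type 1 := Σ s : Finset ↥(Set.Iio κ.ord),
    ({u : Finset ↥(Set.Iio κ.ord) // u ∈ s.powerset} → ↥(Set.Iio κ.ord)) with hIdef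
  haveI : Nonempty I := ⟨⟨∅, fun _ => ⟨0, hkpos⟩⟩⟩
  set eval : I → Set Ordinal.{0} → Ordinal.{0} := fun p X =>
    ↑(p.2 ⟨p.1.filter (fun x => ↑x ∈ X), Finset.mem_powerset.2 (Finset.filter_subset _ _)⟩)
    with hevaldef
  have hIle : #I ≤ #↥(Set.Iio κ.ord) := by
    have h1 : #I = Cardinal.sum fun s : Finset ↥(Set.Iio κ.ord) =>
        #({u : Finset ↥(Set.Iio κ.ord) // u ∈ s.powerset} → ↥(Set.Iio κ.ord)) :=
      Cardinal.mk_sigma _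
    have h2 : ∀ s : Finset ↥(Set.Iio κ.ord),
        #({u : Finset ↥(Set.Iio κ.ord) // u ∈ s.powerset} → ↥(Set.Iio κ.ord))
          ≤ #↥(Set.Iio κ.ord) := by
      intro s
      haveI : Nonempty {u : Finset ↥(Set.Iio κ.ord) // u ∈ s.powerset} :=
        ⟨⟨∅, Finset.mem_powerset.2 (Finset.empty_subset s)⟩⟩
      have hcard : #{u : Finset ↥(Set.Iio κ.ord) // u ∈ s.powerset}
          = (Fintype.card {u : Finset ↥(Set.Iio κ.ord) // u ∈ s.powerset} : ℕ) :=
        Cardinal.mk_fintype _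
      rw [Cardinal.mk_arrow, Cardinal.lift_id, Cardinal.lift_id, hcard,
        Cardinal.power_natCast]
      rw [Cardinal.power_nat_eq]
      · rw [Ordinal.mk_Iio_ordinal, Cardinal.card_ord]
        exact Cardinal.aleph0_le_lift.2 hκ
      · exact Fintype.card_pos
    calc #I = _ := h1
      _ ≤ Cardinal.sum fun _ : Finset ↥(Set.Iio κ.ord) => #↥(Set.Iio κ.ord) :=
        Cardinal.sum_le_sum _ _ h2
      _ = #(Finset ↥(Set.Iio κ.ord)) * #↥(Set.Iio κ.ord) := by
        rw [Cardinal.sum_const, Cardinal.lift_id, Cardinal.lift_id]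
      _ = #↥(Set.Iio κ.ord) * #↥(Set.Iio κ.ord) := by
        rw [Cardinal.mk_finset_of_infinite]
      _ = #↥(Set.Iio κ.ord) := Cardinal.mul_eq_self (by
        rw [Ordinal.mk_Iio_ordinal, Cardinal.card_ord]
        exact Cardinal.aleph0_le_lift.2 hκ)
  obtain ⟨e⟩ := (Cardinal.le_def _ _).1 hIle
  set dec : ↥(Set.Iio κ.ord) → I := Function.invFun e with hdecdef
  have hdec : ∀ p : I, dec (e p) = p := Function.leftInverse_invFun e.injective
  refine ⟨fun τ X => if h : τ < κ.ord then eval (dec ⟨τ, h⟩) X else 0, ?_⟩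
  intro n X ε hε hsep
  have hsep' : ∀ p : Fin n × Fin n, ∃ b : ↥(Set.Iio κ.ord), p.1 ≠ p.2 →
      ((↑b ∈ X p.1 ∧ ↑b ∉ X p.2) ∨ (↑b ∈ X p.2 ∧ ↑b ∉ X p.1)) := by
    intro p
    by_cases h : p.1 ≠ p.2
    · obtain ⟨β, hβ, hor⟩ := hsep p.1 p.2 h
      exact ⟨⟨β, hβ⟩, fun _ => hor⟩
    · exact ⟨⟨0, hkpos⟩, fun h' => absurd h' h⟩
  choose P hP using hsep'
  set s₀ : Finset ↥(Set.Iio κ.ord) := Finset.image P Finset.univ with hs₀def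
  set tr : Fin n → Finset ↥(Set.Iio κ.ord) :=
    fun i => s₀.filter (fun x => ↑x ∈ X i) with htrdef
  have htrne : ∀ i i', i ≠ i' → tr i ≠ tr i' := by
    intro i i' hne heq
    have hmem : P (i, i') ∈ s₀ := Finset.mem_image.2 ⟨(i, i'), Finset.mem_univ _, rfl⟩
    rcases hP (i, i') hne with ⟨h1, h2⟩ | ⟨h1, h2⟩
    · have : P (i, i') ∈ tr i := Finset.mem_filter.2 ⟨hmem, h1⟩
      rw [heq] at this
      exact h2 (Finset.mem_filter.1 this).2
    · have : P (i, i') ∈ tr i' := Finset.mem_filter.2 ⟨hmem, h1⟩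
      rw [← heq] at this
      exact h2 (Finset.mem_filter.1 this).2
  set t : {u : Finset ↥(Set.Iio κ.ord) // u ∈ s₀.powerset} → ↥(Set.Iio κ.ord) :=
    fun u => if h : ∃ i, u.1 = tr i then ⟨ε h.choose, hε _⟩ else ⟨0, hkpos⟩ with htdef
  set idx : I := ⟨s₀, t⟩ with hidxdef
  refine ⟨↑(e idx), (e idx).2, ?_⟩
  intro i
  dsimp only
  rw [dif_pos (show (↑(e idx) : Ordinal) < κ.ord from (e idx).2)]
  have hdec2 : dec ⟨↑(e idx), (e idx).2⟩ = idx := hdec idx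
  rw [hdec2]
  show (↑(t ⟨s₀.filter (fun x => ↑x ∈ X i), _⟩) : Ordinal) = ε i
  have hex : ∃ i', s₀.filter (fun x => ↑x ∈ X i) = tr i' := ⟨i, rfl⟩
  rw [htdef]
  dsimp only
  rw [dif_pos hex]
  have : hex.choose = i := by
    by_contra hne
    exact htrne _ _ hne (hex.choose_spec.symm)
  rw [this]

/-- Let `λ` be a singular cardinal and `⟨λ_j : j < cf(λ)⟩` a strictly increasing
sequence of infinite cardinals cofinal in `λ`.  Then there is a family
`⟨A_{ξ,ε} : ξ < 2^λ, ε < λ⟩` of subsets of `λ` such that for each `ξ` the sets `A_{ξ,ε}`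
are pairwise disjoint in `ε`, and for every finite intersection
`A_{ξ₁,ε₁} ∩ … ∩ A_{ξₙ,εₙ}` (with the `ξ`'s pairwise distinct) there is `j₀ < cf(λ)`
such that for all `j₀ ≤ j < cf(λ)` the trace of the intersection on `λ_j⁺` is stationary
in the successor cardinal `λ_j⁺`. -/
theorem exists_independent_eventually_stationary_family_singular (l : Cardinal.{0})
    (hinf : Cardinal.aleph0 ≤ l) (hsing : l.ord.cof < l)
    (L : Ordinal.{0} → Cardinal.{0})
    (hLinf : ∀ j < l.ord.cof.ord, Cardinal.aleph0 ≤ L j)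
    (hLlt : ∀ j < l.ord.cof.ord, L j < l)
    (hLmono : ∀ j₁ j₂, j₁ < j₂ → j₂ < l.ord.cof.ord → L j₁ < L j₂)
    (hLcof : ∀ c < l, ∃ j < l.ord.cof.ord, c ≤ L j) :
    ∃ A : Ordinal.{0} → Ordinal.{0} → Set Ordinal.{0},
      (∀ ξ ε, ξ < ((2 : Cardinal) ^ l).ord → ε < l.ord → A ξ ε ⊆ Set.Iio l.ord) ∧
      (∀ ξ ε₁ ε₂, ξ < ((2 : Cardinal) ^ l).ord → ε₁ < l.ord → ε₂ < l.ord → ε₁ ≠ ε₂ →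
        A ξ ε₁ ∩ A ξ ε₂ = ∅) ∧
      ∀ n : ℕ, 1 ≤ n → ∀ ξ : Fin n → Ordinal.{0}, (∀ i, ξ i < ((2 : Cardinal) ^ l).ord) →
        Function.Injective ξ → ∀ ε : Fin n → Ordinal.{0}, (∀ i, ε i < l.ord) →
          ∃ j₀ < l.ord.cof.ord, ∀ j, j₀ ≤ j → j < l.ord.cof.ord →
            IsStationaryIn (Order.succ (L j))
              ((⋂ i, A (ξ i) (ε i)) ∩ Set.Iio (Order.succ (L j)).ord) := by
  classical
  have hlpos : (0 : Ordinal) < l.ord := by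
    rw [Cardinal.lt_ord, Ordinal.card_zero]
    exact Cardinal.aleph0_pos.trans_le hinf
  -- l is a limit cardinal
  have hsucclt : ∀ d : Cardinal, ℵ₀ ≤ d → d < l → Order.succ d < l := by
    intro d hd hdl
    rcases lt_or_eq_of_le (Order.succ_le_of_lt hdl) with h | h
    · exact h
    · exfalso
      have : (Order.succ d).ord.cof = Order.succ d := (Cardinal.isRegular_succ hd).cof_eq
      rw [h] at this
      rw [this] at hsing
      exact lt_irrefl l hsing
  -- the coding of ordinals below (2^l).ord by subsets of Iio l.ord
  have hXle : #↥(Set.Iio ((2 : Cardinal) ^ l).ord) ≤ #(Set ↥(Set.Iio l.ord)) := by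
    rw [Ordinal.mk_Iio_ordinal, Cardinal.card_ord, Cardinal.mk_set, Ordinal.mk_Iio_ordinal,
      Cardinal.card_ord, Cardinal.lift_power, Cardinal.lift_two]
  obtain ⟨Φ⟩ := (Cardinal.le_def _ _).1 hXle
  set X : Ordinal → Set Ordinal := fun ξl =>
    if h : ξl < ((2 : Cardinal) ^ l).ord then {β | ∃ hβ : β < l.ord, (⟨β, hβ⟩ : ↥(Set.Iio l.ord)) ∈ Φ ⟨ξl, h⟩}
    else ∅ with hXdef
  have hXsub : ∀ ξl, X ξl ⊆ Set.Iio l.ord := by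
    intro ξl β hβ
    rw [hXdef] at hβ
    dsimp only at hβ
    by_cases h : ξl < ((2 : Cardinal) ^ l).ord
    · rw [dif_pos h] at hβ
      exact hβ.1
    · rw [dif_neg h] at hβ
      exact absurd hβ (Set.notMem_empty β)
  have hXinj : ∀ ξ₁ ξ₂, ξ₁ < ((2 : Cardinal) ^ l).ord → ξ₂ < ((2 : Cardinal) ^ l).ord →
      ξ₁ ≠ ξ₂ → X ξ₁ ≠ X ξ₂ := by
    intro ξ₁ ξ₂ h₁ h₂ hne heq
    apply hne
    have hΦ : Φ ⟨ξ₁, h₁⟩ = Φ ⟨ξ₂, h₂⟩ := by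
      ext b
      have e1 : b ∈ Φ ⟨ξ₁, h₁⟩ ↔ (↑b : Ordinal) ∈ X ξ₁ := by
        rw [hXdef]; dsimp only; rw [dif_pos h₁]
        exact ⟨fun h => ⟨b.2, h⟩, fun ⟨hβ, h⟩ => h⟩
      have e2 : b ∈ Φ ⟨ξ₂, h₂⟩ ↔ (↑b : Ordinal) ∈ X ξ₂ := by
        rw [hXdef]; dsimp only; rw [dif_pos h₂]
        exact ⟨fun h => ⟨b.2, h⟩, fun ⟨hβ, h⟩ => h⟩
      rw [e1, e2, heq]
    exact Subtype.mk_eq_mk.1 (Φ.injective hΦ)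
  -- level data
  have hlev : ∀ j : Ordinal, ∃ (E : Ordinal → Set Ordinal) (G : Ordinal → Set Ordinal → Ordinal),
      j < l.ord.cof.ord →
      ((∀ τ, τ < (L j).ord → E τ ⊆ Set.Ico (L j).ord (Order.succ (L j)).ord) ∧
       (∀ τ₁ τ₂, τ₁ < (L j).ord → τ₂ < (L j).ord → τ₁ ≠ τ₂ → E τ₁ ∩ E τ₂ = ∅) ∧
       (∀ τ, τ < (L j).ord → IsStationaryIn (Order.succ (L j)) (E τ)) ∧
       (∀ (n : ℕ) (Y : Fin n → Set Ordinal) (ε : Fin n → Ordinal),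
         (∀ i, ε i < (L j).ord) →
         (∀ i i', i ≠ i' → ∃ β, β < (L j).ord ∧
           ((β ∈ Y i ∧ β ∉ Y i') ∨ (β ∈ Y i' ∧ β ∉ Y i))) →
         ∃ τ < (L j).ord, ∀ i, G τ (Y i) = ε i)) := by
    intro j
    by_cases hj : j < l.ord.cof.ord
    · obtain ⟨E, hE1, hE2, hE3⟩ := ulam (L j) (hLinf j hj)
      obtain ⟨G, hG⟩ := ek (L j) (hLinf j hj)
      exact ⟨E, G, fun _ => ⟨hE1, hE2, hE3, hG⟩⟩
    · exact ⟨fun _ => ∅, fun _ _ => 0, fun h => absurd h hj⟩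
  choose E G hEG using hlev
  -- the family
  refine ⟨fun ξl ε => {β | ∃ j, ∃ hj : j < l.ord.cof.ord, ∃ τ, τ < (L j).ord ∧
    β ∈ E j τ ∧ G j τ (X ξl) = ε}, ?_, ?_, ?_⟩
  · rintro ξl ε hξ hε β ⟨j, hj, τ, hτ, hβ, -⟩
    have h1 := ((hEG j hj).1 τ hτ) hβ
    have h2 : Order.succ (L j) < l := hsucclt (L j) (hLinf j hj) (hLlt j hj)
    exact lt_of_lt_of_le h1.2 (Cardinal.ord_le_ord.2 h2.le)
  · rintro ξl ε₁ ε₂ hξ hε₁ hε₂ hne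
    ext β
    simp only [Set.mem_inter_iff, Set.mem_setOf_eq, Set.mem_empty_iff_false, iff_false, not_and]
    rintro ⟨j₁, hj₁, τ₁, hτ₁, hβ₁, hG₁⟩ ⟨j₂, hj₂, τ₂, hτ₂, hβ₂, hG₂⟩
    have hIco : ∀ (j : Ordinal) (hj : j < l.ord.cof.ord) (τ : Ordinal), τ < (L j).ord →
        β ∈ E j τ → (L j).ord ≤ β ∧ β < (Order.succ (L j)).ord :=
      fun j hj τ hτ h => Set.mem_Ico.1 ((hEG j hj).1 τ hτ h)
    have hcross : ∀ (j j' : Ordinal), j < j' → j' < l.ord.cof.ord →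
        (Order.succ (L j)).ord ≤ (L j').ord :=
      fun j j' hlt hj' => Cardinal.ord_le_ord.2 (Order.succ_le_of_lt (hLmono j j' hlt hj'))
    rcases lt_trichotomy j₁ j₂ with hlt | heq | hlt
    · have := (hIco j₁ hj₁ τ₁ hτ₁ hβ₁).2
      have h2 := (hIco j₂ hj₂ τ₂ hτ₂ hβ₂).1
      exact absurd ((this.trans_le (hcross j₁ j₂ hlt hj₂)).trans_le h2) (lt_irrefl β)
    · subst heq
      by_cases hττ : τ₁ = τ₂
      · subst hττ
        exact hne (hG₁.symm.trans hG₂)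
      · have := (hEG j₁ hj₁).2.1 τ₁ τ₂ hτ₁ hτ₂ hττ
        have hmem : β ∈ E j₁ τ₁ ∩ E j₁ τ₂ := ⟨hβ₁, hβ₂⟩
        rw [this] at hmem
        exact hmem
    · have := (hIco j₂ hj₂ τ₂ hτ₂ hβ₂).2
      have h2 := (hIco j₁ hj₁ τ₁ hτ₁ hβ₁).1
      exact absurd ((this.trans_le (hcross j₂ j₁ hlt hj₁)).trans_le h2) (lt_irrefl β)
  · intro n hn ξ hξ hξinj ε hε
    -- separating points
    have hsep0 : ∀ p : Fin n × Fin n, ∃ β, β < l.ord ∧ (p.1 ≠ p.2 →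
        ((β ∈ X (ξ p.1) ∧ β ∉ X (ξ p.2)) ∨ (β ∈ X (ξ p.2) ∧ β ∉ X (ξ p.1)))) := by
      intro p
      by_cases h : p.1 ≠ p.2
      · have hXne := hXinj (ξ p.1) (ξ p.2) (hξ p.1) (hξ p.2) (hξinj.ne h)
        have : ∃ β, (β ∈ X (ξ p.1) ∧ β ∉ X (ξ p.2)) ∨ (β ∈ X (ξ p.2) ∧ β ∉ X (ξ p.1)) := by
          by_contra hcon
          push_neg at hcon
          apply hXne
          ext β
          exact ⟨fun hb => (hcon β).1 hb, fun hb => (hcon β).2 hb⟩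
        obtain ⟨β, hβ⟩ := this
        refine ⟨β, ?_, fun _ => hβ⟩
        rcases hβ with ⟨h1, -⟩ | ⟨h1, -⟩
        · exact hXsub _ h1
        · exact hXsub _ h1
      · exact ⟨0, hlpos, fun h' => absurd h' h⟩
    choose Pt hPt using hsep0
    set γ : Ordinal := (Finset.univ.sup fun p : Fin n × Fin n => Pt p) ⊔
      (Finset.univ.sup fun i : Fin n => ε i) with hγdef
    have hγlt : γ < l.ord := by
      rw [hγdef]
      apply max_lt
      · exact Finset.sup_lt_iff hlpos |>.2 fun p _ => (hPt p).1
      · exact Finset.sup_lt_iff hlpos |>.2 fun i _ => hε i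
    set d : Cardinal := Order.succ (γ.card ⊔ ℵ₀) with hddef
    have hℵ0 : ℵ₀ < l := lt_of_le_of_lt (Ordinal.aleph0_le_cof.2 (Cardinal.isSuccLimit_ord hinf)) hsing
    have hdlt : d < l := hsucclt _ le_sup_right (max_lt (Cardinal.lt_ord.1 hγlt) hℵ0)
    obtain ⟨j₀, hj₀, hj₀le⟩ := hLcof d hdlt
    refine ⟨j₀, hj₀, ?_⟩
    intro j hj₀j hj
    have hdLj : d ≤ L j := by
      rcases eq_or_lt_of_le hj₀j with h | h
      · rw [← h]; exact hj₀le
      · exact hj₀le.trans (hLmono j₀ j h hj).le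
    have hγj : γ < (L j).ord := by
      rw [Cardinal.lt_ord]
      exact lt_of_lt_of_le (lt_of_le_of_lt le_sup_left (Order.lt_succ _)) hdLj
    have hεj : ∀ i, ε i < (L j).ord :=
      fun i => lt_of_le_of_lt ((Finset.le_sup (Finset.mem_univ i)).trans le_sup_right) hγj
    have hPtj : ∀ p : Fin n × Fin n, Pt p < (L j).ord :=
      fun p => lt_of_le_of_lt ((Finset.le_sup (Finset.mem_univ p)).trans le_sup_left) hγj
    obtain ⟨hEsub, hEdisj, hEstat, hG⟩ := hEG j hj
    obtain ⟨τ, hτ, hGτ⟩ := hG n (fun i => X (ξ i)) ε hεj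
      (fun i i' hne => ⟨Pt (i, i'), hPtj _, (hPt (i, i')).2 hne⟩)
    refine (hEstat τ hτ).mono ?_ ?_
    · intro β hβ
      refine ⟨Set.mem_iInter.2 fun i => ⟨j, hj, τ, hτ, hβ, hGτ i⟩, ?_⟩
      exact (Set.mem_Ico.1 (hEsub τ hτ hβ)).2
    · exact Set.inter_subset_right
end

section
/- (Engelking–Karłowicz) For every infinite cardinal λ there exists a family ⟨f_ξ : ξ < 2^λ⟩ of functions from λ to λ such that for every n ≥ 1, all pairwise distinct ξ₁, …, ξₙ < 2^λ and arbitrary ε₁, …, εₙ < λ, there exists α < λ with f_{ξ_ℓ}(α) = ε_ℓ for every ℓ = 1, …, n. -/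
open Cardinal

noncomputable section EK
open Classical in
/-- domain type for the Engelking–Karłowicz functions -/
private def EKD (ι : Type) : Type := Σ s : Finset ι, ({t // t ∈ s.powerset} → ι)

open Classical in
private def EKf {ι : Type} (A : Set ι) (d : EKD ι) : ι :=
  d.2 ⟨d.1.filter (fun x => x ∈ A), by simp [Finset.mem_powerset, Finset.filter_subset]⟩

private lemma EKD_card (ι : Type) [Infinite ι] : #(EKD ι) ≤ #ι := by
  have h0 : ℵ₀ ≤ #ι := Cardinal.infinite_iff.1 ‹_›
  calc #(EKD ι) = Cardinal.sum (fun s : Finset ι => #({t // t ∈ s.powerset} → ι)) :=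
        Cardinal.mk_sigma _
    _ ≤ Cardinal.sum (fun _ : Finset ι => #ι) := by
        refine Cardinal.sum_le_sum _ _ (fun s => ?_)
        rw [Cardinal.mk_arrow, Cardinal.lift_id, Cardinal.lift_id]
        exact Cardinal.pow_le h0 (Cardinal.lt_aleph0_of_finite _)
    _ = #(Finset ι) * #ι := Cardinal.sum_const' _ _
    _ = #ι * #ι := by rw [Cardinal.mk_finset_of_infinite]
    _ = #ι := Cardinal.mul_eq_self h0

open Classical in
private lemma EK_core {ι : Type} [Nonempty ι] {n : ℕ} (A : Fin n → Set ι)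
    (hA : Function.Injective A) (ε : Fin n → ι) :
    ∃ d : EKD ι, ∀ i, EKf (A i) d = ε i := by
  classical
  -- pick a separating point for each pair
  have hx : ∀ i j : Fin n, i ≠ j → ∃ x, x ∈ symmDiff (A i) (A j) := by
    intro i j hij
    exact Set.symmDiff_nonempty.2 (fun h => hij (hA h))
  set x : Fin n × Fin n → ι := fun p =>
    if h : ∃ y, y ∈ symmDiff (A p.1) (A p.2) then h.choose else Classical.arbitrary ι with hxdef
  set s : Finset ι := Finset.image x Finset.univ with hs
  set filt : Fin n → Finset ι := fun i => s.filter (fun y => y ∈ A i) with hfilt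
  have hfinj : Function.Injective filt := by
    intro i j hij
    by_contra hne
    have hex := hx i j hne
    have hmem : x (i, j) ∈ symmDiff (A i) (A j) := by
      rw [hxdef]; simp only [dif_pos hex]; exact hex.choose_spec
    have hxs : x (i, j) ∈ s := by simp [hs]
    have h1 : (x (i,j) ∈ filt i) ↔ (x (i,j) ∈ filt j) := by rw [hij]
    simp only [hfilt, Finset.mem_filter, hxs, true_and] at h1
    rw [Set.mem_symmDiff] at hmem
    tauto
  refine ⟨⟨s, fun t => if h : ∃ i, (t : Finset ι) = filt i then ε h.choose else
    Classical.arbitrary ι⟩, fun i => ?_⟩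
  have hfe : (Finset.filter (fun y => y ∈ A i) s) = filt i := rfl
  show (fun t : {t // t ∈ s.powerset} => if h : ∃ i, (t : Finset ι) = filt i then ε h.choose else
    Classical.arbitrary ι) ⟨s.filter (fun y => y ∈ A i), _⟩ = ε i
  simp only
  have hex : ∃ j, (Finset.filter (fun y => y ∈ A i) s) = filt j := ⟨i, rfl⟩
  rw [dif_pos hex]
  congr 1
  exact hfinj hex.choose_spec.symm

end EK

/-- Engelking–Karłowicz: for every infinite cardinal `λ` there is a family
`⟨f_ξ : ξ < 2^λ⟩` of functions from `λ` to `λ` such that for all pairwise distinct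
`ξ₁, …, ξₙ < 2^λ` and arbitrary `ε₁, …, εₙ < λ` there is `α < λ` with
`f_{ξ_ℓ}(α) = ε_ℓ` for all `ℓ`. -/
theorem engelking_karlowicz (l : Cardinal.{0}) (hl : Cardinal.aleph0 ≤ l) :
    ∃ f : Ordinal.{0} → Ordinal.{0} → Ordinal.{0},
      (∀ ξ < ((2 : Cardinal) ^ l).ord, ∀ a < l.ord, f ξ a < l.ord) ∧
      ∀ n : ℕ, 1 ≤ n → ∀ ξ : Fin n → Ordinal.{0}, (∀ i, ξ i < ((2 : Cardinal) ^ l).ord) →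
        Function.Injective ξ → ∀ ε : Fin n → Ordinal.{0}, (∀ i, ε i < l.ord) →
          ∃ a < l.ord, ∀ i, f (ξ i) a = ε i := by
  classical
  set ι := l.ord.ToType with hι
  have hmkι : #ι = l := by rw [hι, Cardinal.mk_toType, Cardinal.card_ord]
  haveI : Infinite ι := Cardinal.infinite_iff.2 (by rw [hmkι]; exact hl)
  set eι : ι ≃ Set.Iio l.ord := (@Ordinal.ToType.mk l.ord).toEquiv.symm with heι
  -- equivalence between Iio (2^l).ord and Set ι
  have hmk2 : Cardinal.lift.{0} #(Set.Iio ((2:Cardinal) ^ l).ord)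
      = Cardinal.lift.{1} #(Set ι) := by
    rw [Ordinal.mk_Iio_ordinal, Cardinal.mk_set, hmkι, Cardinal.card_ord]; simp
  obtain ⟨eA⟩ := Cardinal.lift_mk_eq'.1 hmk2
  -- surjection from ι onto EKD ι
  obtain ⟨emb⟩ := (Cardinal.le_def (EKD ι) ι).1 (EKD_card ι)
  haveI : Nonempty (EKD ι) := ⟨⟨∅, fun _ => Classical.arbitrary ι⟩⟩
  set σ : ι → EKD ι := Function.invFun emb with hσ
  have hσsurj : ∀ d : EKD ι, σ (emb d) = d := fun d =>
    Function.leftInverse_invFun emb.injective d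
  refine ⟨fun ξ a => if h : ξ < ((2:Cardinal) ^ l).ord ∧ a < l.ord then
      (eι (EKf (eA ⟨ξ, h.1⟩) (σ (eι.symm ⟨a, h.2⟩))) : Set.Iio l.ord).val else 0,
      fun ξ hξ a ha => ?_, ?_⟩
  · dsimp only; rw [dif_pos ⟨hξ, ha⟩]
    exact (eι (EKf (eA ⟨ξ, hξ⟩) (σ (eι.symm ⟨a, ha⟩)))).2
  · intro n hn ξ hξ hinj ε hε
    set A : Fin n → Set ι := fun i => eA ⟨ξ i, hξ i⟩ with hA
    have hAinj : Function.Injective A := by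
      intro i j hij
      have := eA.injective hij
      exact hinj (congrArg Subtype.val this)
    obtain ⟨d, hd⟩ := EK_core A hAinj (fun i => eι.symm ⟨ε i, hε i⟩)
    refine ⟨(eι (emb d)).val, (eι (emb d)).2, fun i => ?_⟩
    dsimp only; rw [dif_pos ⟨hξ i, (eι (emb d)).2⟩]
    have h1 : eι.symm ⟨(eι (emb d)).val, (eι (emb d)).2⟩ = emb d := by
      simp
    rw [h1, hσsurj]
    have h2 : eA ⟨ξ i, hξ i⟩ = A i := rfl
    rw [h2, hd i]
    simp
end

section
/- For every infinite cardinal θ, the interval of ordinals [θ, θ⁺) can be partitioned into θ⁺ many pairwise disjoint sets, each of which is a stationary subset of θ⁺; that is, there is a family ⟨S_α : α < θ⁺⟩ of pairwise disjoint subsets of θ⁺ whose union is {δ : θ ≤ δ < θ⁺} and such that each S_α is stationary in θ⁺. -/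
lemma IsStationaryIn.superset {k : Cardinal.{0}} {S T : Set Ordinal.{0}}
    (hS : IsStationaryIn k S) (hST : S ⊆ T) (hT : T ⊆ Set.Iio k.ord) :
    IsStationaryIn k T :=
  ⟨hT, fun C hC => (hS.2 C hC).mono (Set.inter_subset_inter_left C hST)⟩

lemma tail_club {k : Cardinal.{0}} (β : Ordinal) (hβ : β < k.ord) :
    IsClubIn k {x | β ≤ x ∧ x < k.ord} := by
  refine ⟨fun x hx => hx.2, fun a ha =>
    ⟨max a β, ⟨le_max_right a β, max_lt ha hβ⟩, le_max_left a β⟩, ?_⟩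
  rintro S hS ⟨s, hs⟩ hlt
  exact ⟨(hS hs).1.trans (le_csSup ⟨k.ord, fun x hx => (hS hx).2.le⟩ hs), hlt⟩

open Cardinal
lemma iInter_club (θ : Cardinal.{0}) (hθ : Cardinal.aleph0 ≤ θ) {ι : Type} [Nonempty ι]
    (hι : #ι ≤ θ) (C : ι → Set Ordinal.{0})
    (hC : ∀ i, IsClubIn (Order.succ θ) (C i)) :
    IsClubIn (Order.succ θ) (⋂ i, C i) := by
  classical
  set κ := (Order.succ θ).ord with hκdef
  have hcof : κ.cof = Order.succ θ := (Cardinal.isRegular_succ hθ).cof_eq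
  have hsub : ∀ i, C i ⊆ Set.Iio κ := fun i => (hC i).1
  have hsupι : ∀ f : ι → Ordinal.{0}, (∀ i, f i < κ) → (⨆ i, f i) < κ := by
    intro f hf
    refine Ordinal.iSup_lt_ord ?_ hf
    rw [hcof]
    exact hι.trans_lt (Order.lt_succ θ)
  have hsupω : ∀ f : ℕ → Ordinal.{0}, (∀ n, f n < κ) → (⨆ n, f n) < κ := by
    intro f hf
    refine Ordinal.iSup_lt_ord ?_ hf
    rw [hcof, Cardinal.mk_nat]
    exact hθ.trans_lt (Order.lt_succ θ)
  refine ⟨fun x hx => hsub (Classical.arbitrary ι) (Set.mem_iInter.mp hx _), ?_, ?_⟩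
  · intro a ha
    choose nxt hmem hge using fun (i : ι) (x : Set.Iio κ) => (hC i).2.1 x.1 x.2
    have hnlt : ∀ i x, nxt i x < κ := fun i x => hsub i (hmem i x)
    set b : ℕ → Ordinal.{0} :=
      fun n => Nat.rec a (fun _ p => if h : p < κ then ⨆ i, nxt i ⟨p, h⟩ else 0) n with hb
    have hblt : ∀ n, b n < κ := by
      intro n; induction n with
      | zero => exact ha
      | succ n ih =>
        show (if h : b n < κ then ⨆ i, nxt i ⟨b n, h⟩ else 0) < κ
        rw [dif_pos ih]; exact hsupι _ fun i => hnlt i ⟨b n, ih⟩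
    have hbsucc : ∀ n, b (n + 1) = ⨆ i, nxt i ⟨b n, hblt n⟩ := fun n => dif_pos (hblt n)
    have hbdd : BddAbove (Set.range b) :=
      ⟨κ, fun x hx => by obtain ⟨n, rfl⟩ := hx; exact (hblt n).le⟩
    have hble : ∀ n, b n ≤ ⨆ m, b m := fun n => le_ciSup hbdd n
    have hilt : (⨆ n, b n) < κ := hsupω b hblt
    have key : ∀ i, (⨆ n, b n) ∈ C i := by
      intro i
      have hbdd2 : BddAbove (Set.range fun n => nxt i ⟨b n, hblt n⟩) :=
        ⟨κ, fun x hx => by obtain ⟨n, rfl⟩ := hx; exact (hnlt i _).le⟩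
      have hsups : sSup (Set.range fun n => nxt i ⟨b n, hblt n⟩) = ⨆ n, b n := by
        apply le_antisymm
        · apply csSup_le (Set.range_nonempty _)
          rintro x ⟨n, rfl⟩
          calc nxt i ⟨b n, hblt n⟩ ≤ ⨆ j, nxt j ⟨b n, hblt n⟩ :=
                le_ciSup ⟨κ, fun x hx => by obtain ⟨j, rfl⟩ := hx; exact (hnlt j _).le⟩ i
            _ = b (n + 1) := (hbsucc n).symm
            _ ≤ ⨆ m, b m := hble (n + 1)
        · apply ciSup_le; intro n
          exact (hge i ⟨b n, hblt n⟩).trans (le_csSup hbdd2 ⟨n, rfl⟩)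
      have := (hC i).2.2 (Set.range fun n => nxt i ⟨b n, hblt n⟩)
        (by rintro x ⟨n, rfl⟩; exact hmem i _)
        (Set.range_nonempty _) (by rw [hsups]; exact hilt)
      rwa [hsups] at this
    exact ⟨⨆ n, b n, Set.mem_iInter.mpr key, hble 0⟩
  · intro S hS hne hlt
    exact Set.mem_iInter.mpr fun i =>
      (hC i).2.2 S (fun x hx => Set.mem_iInter.mp (hS hx) i) hne hlt

open Cardinal in
/-- For every infinite cardinal `θ`, the interval `[θ, θ⁺)` of ordinals can be
partitioned into `θ⁺` many pairwise disjoint sets, each stationary in the successor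
cardinal `θ⁺`. -/
theorem exists_partition_into_stationary_sets (θ : Cardinal.{0})
    (hθ : Cardinal.aleph0 ≤ θ) :
    ∃ S : Ordinal.{0} → Set Ordinal.{0},
      (∀ α₁ α₂, α₁ < (Order.succ θ).ord → α₂ < (Order.succ θ).ord → α₁ ≠ α₂ →
        S α₁ ∩ S α₂ = ∅) ∧
      (⋃ α ∈ Set.Iio (Order.succ θ).ord, S α) =
        {δ : Ordinal.{0} | θ.ord ≤ δ ∧ δ < (Order.succ θ).ord} ∧
      ∀ α < (Order.succ θ).ord, IsStationaryIn (Order.succ θ) (S α) := by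
  classical
  set κ := (Order.succ θ).ord with hκdef
  have hθ1 : ℵ₀ ≤ Order.succ θ := hθ.trans (Order.le_succ θ)
  have hθκ : θ.ord < κ := Cardinal.ord_lt_ord.mpr (Order.lt_succ θ)
  have hκlim : Order.IsSuccLimit κ := Cardinal.isSuccLimit_ord hθ1
  have h0κ : (0 : Ordinal) < κ := hκlim.pos
  have hord0 : (0 : Ordinal) < θ.ord := by
    rw [Cardinal.lt_ord, Ordinal.card_zero]
    exact Cardinal.aleph0_pos.trans_le hθ
  set E := θ.ord.ToType with hE
  have hmkE : #E = θ := by rw [hE, Cardinal.mk_toType, Cardinal.card_ord]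
  haveI hEne : Nonempty E := Cardinal.mk_ne_zero_iff.mp
    (by rw [hmkE]; exact (Cardinal.aleph0_pos.trans_le hθ).ne')
  -- choice of surjections E → Iio δ
  have surj : ∀ δ : Ordinal.{0}, ∃ f : E → Ordinal.{0},
      θ.ord ≤ δ → δ < κ → ∀ x < δ, ∃ e, f e = x := by
    intro δ
    by_cases h : θ.ord ≤ δ ∧ δ < κ
    · obtain ⟨hθδ, hδκ⟩ := h
      have hδc : δ.card ≤ θ := Order.lt_succ_iff.mp (Cardinal.lt_ord.mp hδκ)
      have hle : Cardinal.lift.{0} #(Set.Iio δ) ≤ Cardinal.lift.{1} #E := by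
        rw [Cardinal.lift_id', Ordinal.mk_Iio_ordinal, hmkE]
        exact Cardinal.lift_le.mpr hδc
      obtain ⟨j⟩ := Cardinal.lift_mk_le'.mp hle
      haveI : Nonempty (Set.Iio δ) := ⟨⟨0, hord0.trans_le hθδ⟩⟩
      refine ⟨fun e => (Function.invFun j e).1, fun _ _ x hx => ?_⟩
      obtain ⟨e, he⟩ := Function.invFun_surjective j.injective ⟨x, hx⟩
      refine ⟨e, ?_⟩
      show ((Function.invFun j e : Set.Iio δ) : Ordinal.{0}) = x
      rw [he]
    · exact ⟨fun _ => 0, fun h1 h2 => absurd ⟨h1, h2⟩ h⟩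
  choose F hF using surj
  -- the Ulam matrix
  set A : E → Ordinal.{0} → Set Ordinal.{0} :=
    fun e α => {δ | θ.ord ≤ δ ∧ δ < κ ∧ α < δ ∧ F δ e = α} with hA
  have hAsub : ∀ e α, A e α ⊆ Set.Iio κ := fun e α δ hδ => hδ.2.1
  have hAdisj : ∀ (e : E) α₁ α₂, α₁ ≠ α₂ → A e α₁ ∩ A e α₂ = ∅ := by
    intro e α₁ α₂ hne
    ext δ
    simp only [Set.mem_inter_iff, Set.mem_empty_iff_false, iff_false, not_and]
    intro h1 h2
    exact absurd (h1.2.2.2.symm.trans h2.2.2.2) hne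
  -- selection of a stationary row entry for each column
  have sel : ∀ α : Ordinal.{0}, ∃ e : E, α < κ →
      IsStationaryIn (Order.succ θ) (A e α) := by
    intro α
    by_cases hα : α < κ
    swap
    · exact ⟨Classical.arbitrary E, fun h => absurd h hα⟩
    by_contra hcon
    push_neg at hcon
    have hNS : ∀ e : E, ∃ C, IsClubIn (Order.succ θ) C ∧ A e α ∩ C = ∅ := by
      intro e
      have h1 : ¬ IsStationaryIn (Order.succ θ) (A e α) := (hcon e).2
      rw [IsStationaryIn] at h1
      have h2 := (not_and.mp h1) (hAsub e α)
      push_neg at h2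
      obtain ⟨C, hC, hCne⟩ := h2
      exact ⟨C, hC, hCne⟩
    choose Cl hCl hCldisj using hNS
    set β := max θ.ord (α + 1) with hβ
    have hβκ : β < κ := max_lt hθκ (hκlim.succ_lt hα)
    set D : Option E → Set Ordinal.{0} :=
      fun o => o.elim {x | β ≤ x ∧ x < κ} Cl with hD
    have hDclub : ∀ o, IsClubIn (Order.succ θ) (D o) := by
      rintro (_ | e)
      · exact tail_club β hβκ
      · exact hCl e
    have hmkO : #(Option E) ≤ θ := by
      rw [Cardinal.mk_option, hmkE, Cardinal.add_one_eq hθ]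
    obtain ⟨b, hb, -⟩ := (iInter_club θ hθ hmkO D hDclub).2.1 0 h0κ
    have hbD : ∀ o, b ∈ D o := Set.mem_iInter.mp hb
    have hbnone : β ≤ b ∧ b < κ := hbD none
    have hθb : θ.ord ≤ b := (le_max_left _ _).trans hbnone.1
    have hαb : α < b := (Order.lt_succ α).trans_le
      (by rw [← Ordinal.add_one_eq_succ]; exact (le_max_right _ _).trans hbnone.1)
    obtain ⟨e, he⟩ := hF b hθb hbnone.2 α hαb
    have hbA : b ∈ A e α := ⟨hθb, hbnone.2, hαb, he⟩
    have : b ∈ (∅ : Set Ordinal.{0}) := hCldisj e ▸ Set.mem_inter hbA (hbD (some e))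
    exact this
  choose efn hefn using sel
  -- pigeonhole: some row is used (succ θ)-many times
  have hmkX : #(Set.Iio κ) = Cardinal.lift.{1} (Order.succ θ) := by
    rw [Ordinal.mk_Iio_ordinal, hκdef, Cardinal.card_ord]
  have fib : ∃ e₀ : E,
      #{x : Set.Iio κ // efn x.1 = e₀} = Cardinal.lift.{1} (Order.succ θ) := by
    by_contra hcon
    push_neg at hcon
    have hlt : ∀ e : E, #{x : Set.Iio κ // efn x.1 = e} ≤ Cardinal.lift.{1} θ := by
      intro e
      have h1 : #{x : Set.Iio κ // efn x.1 = e} ≤ #(Set.Iio κ) := Cardinal.mk_subtype_le _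
      rw [hmkX, Cardinal.lift_succ] at h1
      exact Order.lt_succ_iff.mp
        (lt_of_le_of_ne h1 (by rw [← Cardinal.lift_succ]; exact hcon e))
    have hXeq : #(Set.Iio κ) =
        Cardinal.sum fun e : E => #{x : Set.Iio κ // efn x.1 = e} := by
      rw [← Cardinal.mk_sigma]
      exact Cardinal.mk_congr (Equiv.sigmaFiberEquiv fun x : Set.Iio κ => efn x.1).symm
    have hle2 : #(Set.Iio κ) ≤ Cardinal.lift.{1} θ := by
      rw [hXeq]
      calc Cardinal.sum (fun e : E => #{x : Set.Iio κ // efn x.1 = e})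
          ≤ Cardinal.sum (fun _ : E => Cardinal.lift.{1} θ) := Cardinal.sum_le_sum _ _ hlt
        _ = Cardinal.lift.{1} #E * Cardinal.lift.{0} (Cardinal.lift.{1} θ) :=
            Cardinal.sum_const E (Cardinal.lift.{1} θ)
        _ = Cardinal.lift.{1} θ := by
            rw [Cardinal.lift_id', hmkE, ← Cardinal.lift_mul, Cardinal.mul_eq_self hθ]
    rw [hmkX] at hle2
    exact (Cardinal.lift_lt.mpr (Order.lt_succ θ)).not_ge hle2
  obtain ⟨e₀, he₀⟩ := fib
  obtain ⟨G⟩ : Nonempty (Set.Iio κ ≃ {x : Set.Iio κ // efn x.1 = e₀}) :=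
    Cardinal.eq.mp (hmkX.trans he₀.symm)
  -- the reindexed stationary family
  set T : Ordinal.{0} → Set Ordinal.{0} :=
    fun α => if h : α < κ then A e₀ (G ⟨α, h⟩).1.1 else ∅ with hT
  have hTeq : ∀ α (h : α < κ), T α = A e₀ (G ⟨α, h⟩).1.1 := by
    intro α h
    simp only [hT]
    rw [dif_pos h]
  have hTempty : ∀ α, ¬ α < κ → T α = ∅ := by
    intro α h
    simp only [hT]
    rw [dif_neg h]
  have hTsub : ∀ α, T α ⊆ {δ | θ.ord ≤ δ ∧ δ < κ} := by
    intro α δ hδ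
    by_cases h : α < κ
    · rw [hTeq α h] at hδ; exact ⟨hδ.1, hδ.2.1⟩
    · rw [hTempty α h] at hδ; exact absurd hδ (Set.notMem_empty δ)
  have hTstat : ∀ α, α < κ → IsStationaryIn (Order.succ θ) (T α) := by
    intro α h
    have h2 : efn (G ⟨α, h⟩).1.1 = e₀ := (G ⟨α, h⟩).2
    have h3 := hefn (G ⟨α, h⟩).1.1 (G ⟨α, h⟩).1.2
    rw [h2] at h3
    rw [hTeq α h]
    exact h3
  have hTdisj : ∀ α₁ α₂, α₁ < κ → α₂ < κ → α₁ ≠ α₂ → T α₁ ∩ T α₂ = ∅ := by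
    intro α₁ α₂ h₁ h₂ hne
    have hGne : (G ⟨α₁, h₁⟩).1.1 ≠ (G ⟨α₂, h₂⟩).1.1 := by
      intro hEq
      exact hne (congrArg Subtype.val (G.injective (Subtype.ext (Subtype.ext hEq))))
    rw [hTeq α₁ h₁, hTeq α₂ h₂]
    exact hAdisj e₀ _ _ hGne
  set L : Set Ordinal.{0} := {δ | θ.ord ≤ δ ∧ δ < κ ∧ ∀ γ, δ ∉ T γ} with hL
  have hLT : ∀ γ, L ∩ T γ = ∅ := by
    intro γ
    ext δ
    simp only [Set.mem_inter_iff, Set.mem_empty_iff_false, iff_false, not_and]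
    intro h1 h2
    exact h1.2.2 γ h2
  refine ⟨fun α => if α = 0 then T 0 ∪ L else T α, ?_, ?_, ?_⟩
  · intro α₁ α₂ h₁ h₂ hne
    dsimp only
    by_cases e₁ : α₁ = 0 <;> by_cases e₂ : α₂ = 0
    · exact absurd (e₁.trans e₂.symm) hne
    · rw [if_pos e₁, if_neg e₂, Set.union_inter_distrib_right,
        hTdisj 0 α₂ h0κ h₂ (fun h => e₂ h.symm), hLT α₂, Set.union_empty]
    · rw [if_neg e₁, if_pos e₂, Set.inter_union_distrib_left,
        hTdisj α₁ 0 h₁ h0κ (by rw [← e₂] at *; exact hne),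
        Set.inter_comm (T α₁) L, hLT α₁, Set.union_empty]
    · rw [if_neg e₁, if_neg e₂]
      exact hTdisj α₁ α₂ h₁ h₂ hne
  · ext δ
    simp only [Set.mem_iUnion, Set.mem_Iio, Set.mem_setOf_eq]
    constructor
    · rintro ⟨α, hα, hδ⟩
      by_cases e : α = 0
      · rw [if_pos e] at hδ
        rcases hδ with h | h
        · exact hTsub 0 h
        · exact ⟨h.1, h.2.1⟩
      · rw [if_neg e] at hδ
        exact hTsub α hδ
    · intro hδ
      by_cases hmem : ∃ γ, δ ∈ T γ
      · obtain ⟨γ, hγ⟩ := hmem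
        have hγκ : γ < κ := by
          by_contra h
          rw [hTempty γ h] at hγ
          exact hγ
        refine ⟨γ, hγκ, ?_⟩
        by_cases e : γ = 0
        · rw [if_pos e]; left; rw [← e]; exact hγ
        · rw [if_neg e]; exact hγ
      · push_neg at hmem
        exact ⟨0, h0κ, by rw [if_pos rfl]; exact Or.inr ⟨hδ.1, hδ.2, hmem⟩⟩
  · intro α hα
    dsimp only
    by_cases e : α = 0
    · rw [if_pos e]
      refine (hTstat 0 h0κ).superset Set.subset_union_left ?_
      intro x hx
      rcases hx with h | h
      · exact hTsub 0 h |>.2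
      · exact h.2.1
    · rw [if_neg e]
      exact hTstat α hα
end
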